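/- arXiv:2007.08865 — 4 statements merged into one kernel-verified Lean document; each statement's English description precedes it below -/
import Mathlib

section
/- (Product of two length-1 mono-brackets) For all integers s, t ≥ 1, the following identity of formal power series holds in ℚ⟦q⟧: [s]·[t] = [s,t] + [t,s] + [s+t] + Σ_{j=1}^{s} λ^j_{s,t}·[j] + Σ_{j=1}^{t} λ^j_{t,s}·[j], where λ^j_{a,b} = (−1)^{b−1}·C(a+b−j−1, a−j)·B_{a+b−j}/(a+b−j)!. -/
/-- The mono-bracket `[s_1, …, s_l] ∈ ℚ⟦q⟧`: the coefficient of `q^N` is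
`(∏ (s_i - 1)!)⁻¹ Σ d_1^{s_1-1} ⋯ d_l^{s_l-1}` over `n_1 > ⋯ > n_l ≥ 1`,
`d_i ≥ 1` with `Σ n_i d_i = N` (a finite sum). -/
noncomputable def monoBracket {l : ℕ} (s : Fin l → ℕ) : PowerSeries ℚ :=
  PowerSeries.mk fun N =>
    (∏ i, ((s i - 1).factorial : ℚ))⁻¹ *
      ∑ᶠ nd ∈ {nd : (Fin l → ℕ) × (Fin l → ℕ) |
          StrictAnti nd.1 ∧ (∀ i, 0 < nd.1 i) ∧ (∀ i, 0 < nd.2 i) ∧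
            ∑ i, nd.1 i * nd.2 i = N},
        ∏ i, (nd.2 i : ℚ) ^ (s i - 1)

/-- The coefficient `λ^j_{a,b} = (-1)^{b-1} C(a+b-j-1, a-j) B_{a+b-j}/(a+b-j)!`,
where `B_k` are the Bernoulli numbers (with `B_1 = -1/2`). -/
noncomputable def lam (a b j : ℕ) : ℚ :=
  (-1 : ℚ) ^ (b - 1) * ((a + b - j - 1).choose (a - j) : ℚ) *
    bernoulli (a + b - j) / ((a + b - j).factorial : ℚ)



open Finset

noncomputable def Mfun (s t c : ℕ) : ℚ :=
  (c : ℚ) ^ (s + t - 1) / ((s + t - 1).factorial : ℚ) +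
    (∑ j ∈ Icc 1 s, lam s t j * (c : ℚ) ^ (j - 1) / ((j - 1).factorial : ℚ)) +
    (∑ j ∈ Icc 1 t, lam t s j * (c : ℚ) ^ (j - 1) / ((j - 1).factorial : ℚ))

lemma lam_shape (a b j : ℕ) (x y z : ℕ) (hx : a + b - j - 1 = x) (hy : a - j = y)
    (hz : a + b - j = z) :
    lam a b j = (-1 : ℚ) ^ (b - 1) * (x.choose y : ℚ) * bernoulli z / (z.factorial : ℚ) := by
  unfold lam; rw [hx, hy, hz]

lemma J1 (a b j : ℕ) (hb : 1 ≤ b) (hj1 : 1 ≤ j) (hja : j ≤ a) :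
    (a : ℚ) * lam (a + 1) b j + (b : ℚ) * lam a (b + 1) j
      = ((j : ℚ) - 1) * lam a b (j - 1) := by
  set m := a - j with hm
  have hma : a = m + j := by omega
  have h1 : lam (a + 1) b j = (-1 : ℚ) ^ (b - 1) * ((m + b).choose (m + 1) : ℚ) *
      bernoulli (m + b + 1) / ((m + b + 1).factorial : ℚ) :=
    lam_shape _ _ _ _ _ _ (by omega) (by omega) (by omega)
  have h2' : lam a (b + 1) j = (-1 : ℚ) ^ b * ((m + b).choose m : ℚ) *
      bernoulli (m + b + 1) / ((m + b + 1).factorial : ℚ) := by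
    have := lam_shape a (b + 1) j (m + b) m (m + b + 1) (by omega) (by omega) (by omega)
    rw [this]; norm_num
  have h3 : lam a b (j - 1) = (-1 : ℚ) ^ (b - 1) * ((m + b).choose (m + 1) : ℚ) *
      bernoulli (m + b + 1) / ((m + b + 1).factorial : ℚ) :=
    lam_shape _ _ _ _ _ _ (by omega) (by omega) (by omega)
  rw [h1, h2', h3]
  have hsign : (-1 : ℚ) ^ b = -(-1 : ℚ) ^ (b - 1) := by
    conv_lhs => rw [show b = (b - 1) + 1 by omega]
    rw [pow_succ]; ring
  rw [hsign]
  have hchoose : ((m + b).choose (m + 1) : ℚ) * ((m : ℚ) + 1) = ((m + b).choose m : ℚ) * b := by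
    have h := Nat.choose_succ_right_eq (m + b) m
    have h' : (m + b) - m = b := by omega
    rw [h'] at h
    exact_mod_cast congrArg (fun x : ℕ => (x : ℚ)) h
  have hlin : (a : ℚ) * ((m + b).choose (m + 1) : ℚ) - (b : ℚ) * ((m + b).choose m : ℚ)
      = ((j : ℚ) - 1) * ((m + b).choose (m + 1) : ℚ) := by
    have hja' : (a : ℚ) = (m : ℚ) + j := by exact_mod_cast congrArg (fun x : ℕ => (x : ℚ)) hma
    rw [hja']; linear_combination hchoose
  field_simp
  linear_combination (bernoulli (m + b + 1)) * hlin

lemma J2 (a b : ℕ) : lam (a + 1) b (a + 1) = lam a b a := by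
  rw [lam_shape (a+1) b (a+1) (b-1) 0 b (by omega) (by omega) (by omega),
    lam_shape a b a (b-1) 0 b (by omega) (by omega) (by omega)]

lemma side (a b c : ℕ) (ha : 1 ≤ a) (hb : 1 ≤ b) :
    (a : ℚ) * (∑ j ∈ Icc 1 (a + 1), lam (a + 1) b j * (c : ℚ) ^ (j - 1) / ((j - 1).factorial : ℚ))
      + (b : ℚ) * (∑ j ∈ Icc 1 a, lam a (b + 1) j * (c : ℚ) ^ (j - 1) / ((j - 1).factorial : ℚ))
    = (c : ℚ) * (∑ j ∈ Icc 1 a, lam a b j * (c : ℚ) ^ (j - 1) / ((j - 1).factorial : ℚ)) := by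
  -- LHS reorganization
  have hins : Icc 1 (a + 1) = insert (a + 1) (Icc 1 a) :=
    (Finset.insert_Icc_right_eq_Icc_add_one (by omega)).symm
  rw [hins, Finset.sum_insert (by simp)]
  rw [mul_add, mul_sum, mul_sum, add_assoc, ← Finset.sum_add_distrib]
  have hterm : ∀ j ∈ Icc 1 a,
      (a : ℚ) * (lam (a + 1) b j * (c : ℚ) ^ (j - 1) / ((j - 1).factorial : ℚ))
        + (b : ℚ) * (lam a (b + 1) j * (c : ℚ) ^ (j - 1) / ((j - 1).factorial : ℚ))
      = ((j : ℚ) - 1) * lam a b (j - 1) * (c : ℚ) ^ (j - 1) / ((j - 1).factorial : ℚ) := by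
    intro j hj
    rw [Finset.mem_Icc] at hj
    have := J1 a b j hb hj.1 hj.2
    field_simp
    linear_combination ((c : ℚ) ^ (j - 1)) * this
  rw [Finset.sum_congr rfl hterm]
  -- RHS reorganization
  rw [mul_sum]
  have hRterm : ∀ j ∈ Icc 1 a,
      (c : ℚ) * (lam a b j * (c : ℚ) ^ (j - 1) / ((j - 1).factorial : ℚ))
      = lam a b j * (c : ℚ) ^ j / ((j - 1).factorial : ℚ) := by
    intro j hj
    rw [Finset.mem_Icc] at hj
    have : (c : ℚ) ^ j = (c : ℚ) ^ (j - 1) * c := by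
      conv_lhs => rw [show j = (j - 1) + 1 by omega]
      rw [pow_succ]
    rw [this]; ring
  rw [Finset.sum_congr rfl hRterm]
  -- turn the extra term into the (a+1)-indexed term of the shifted family
  have hextra : (a : ℚ) * (lam (a + 1) b (a + 1) * (c : ℚ) ^ ((a + 1) - 1) / (((a + 1) - 1).factorial : ℚ))
      = (((a + 1 : ℕ) : ℚ) - 1) * lam a b ((a + 1) - 1) * (c : ℚ) ^ ((a + 1) - 1) / (((a + 1) - 1).factorial : ℚ) := by
    rw [J2]
    simp only [Nat.add_sub_cancel]
    push_cast
    ring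
  rw [hextra]
  have hins2 := (Finset.sum_insert (f := fun x : ℕ =>
      ((x : ℚ) - 1) * lam a b (x - 1) * (c : ℚ) ^ (x - 1) / ((x - 1).factorial : ℚ))
    (show (a + 1) ∉ Icc 1 a by simp)).symm
  rw [hins2, Finset.insert_Icc_right_eq_Icc_add_one (by omega)]
  -- split off the vanishing j = 1 term
  rw [← Finset.insert_Icc_add_one_left_eq_Icc (by omega : 1 ≤ a + 1),
    Finset.sum_insert (by simp), show ((((1:ℕ) : ℚ)) - 1) * lam a b (1 - 1) * (c : ℚ) ^ (1 - 1) / (((1:ℕ) - 1).factorial : ℚ) = 0 by norm_num]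
  rw [zero_add]
  -- reindex k = j + 1
  rw [← Finset.map_add_right_Icc 1 a 1, Finset.sum_map]
  apply Finset.sum_congr rfl
  intro j hj
  rw [Finset.mem_Icc] at hj
  simp only [addRightEmbedding_apply, Nat.add_sub_cancel]
  have hfac : ((j.factorial : ℚ)) = (j : ℚ) * ((j - 1).factorial : ℚ) := by
    conv_lhs => rw [show j = (j - 1) + 1 by omega]
    rw [Nat.factorial_succ]
    push_cast [show j - 1 + 1 = j by omega]
    ring
  have hj0 : ((j - 1).factorial : ℚ) ≠ 0 := by exact_mod_cast (j - 1).factorial_ne_zero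
  have hjj : (j : ℚ) ≠ 0 := by
    have : 0 < j := by omega
    exact_mod_cast this.ne'
  rw [hfac]
  push_cast
  field_simp
  ring

lemma Mrec (s t c : ℕ) (hs : 1 ≤ s) (ht : 1 ≤ t) :
    (s : ℚ) * Mfun (s + 1) t c + (t : ℚ) * Mfun s (t + 1) c = (c : ℚ) * Mfun s t c := by
  unfold Mfun
  rw [show s + 1 + t - 1 = s + t by omega, show s + (t + 1) - 1 = s + t by omega]
  have h1 := side s t c hs ht
  have h2 := side t s c ht hs
  have htop : (s : ℚ) * ((c : ℚ) ^ (s + t) / (((s + t).factorial : ℚ)))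
      + (t : ℚ) * ((c : ℚ) ^ (s + t) / ((s + t).factorial : ℚ))
      = (c : ℚ) * ((c : ℚ) ^ (s + t - 1) / (((s + t - 1).factorial : ℚ))) := by
    have e0 : s + t = (s + t - 1) + 1 := by omega
    have e1 : (c : ℚ) ^ (s + t) = (c : ℚ) ^ (s + t - 1) * c := by
      conv_lhs => rw [e0, pow_succ]
    have e2 : ((s + t).factorial : ℚ) = (((s + t - 1) + 1 : ℕ) : ℚ) * ((s + t - 1).factorial : ℚ) := by
      conv_lhs => rw [e0]
      rw [Nat.factorial_succ]
      push_cast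
      ring
    have e3 : (s : ℚ) + (t : ℚ) = (((s + t - 1) + 1 : ℕ) : ℚ) := by
      push_cast [show s + t - 1 + 1 = s + t by omega]
      ring
    have hne : ((s + t - 1).factorial : ℚ) ≠ 0 := by exact_mod_cast (s + t - 1).factorial_ne_zero
    have hne2 : (((s + t - 1) + 1 : ℕ) : ℚ) ≠ 0 := by positivity
    rw [e1, e2, ← e3]
    field_simp
  linear_combination h1 + h2 + htop

lemma lam_one_left (p : ℕ) :
    lam 1 (p + 1) 1 = (-1 : ℚ) ^ p * bernoulli (p + 1) / ((p + 1).factorial : ℚ) := by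
  rw [lam_shape 1 (p + 1) 1 p 0 (p + 1) (by omega) (by omega) (by omega)]
  simp

lemma base (p c : ℕ) (hc : 1 ≤ c) :
    ∑ d ∈ Ico 1 c, (((c - d : ℕ)) : ℚ) ^ p
      = (p.factorial : ℚ) * Mfun 1 (p + 1) c := by
  -- reindex d ↦ c - d
  have hre : ∑ d ∈ Ico 1 c, (((c - d : ℕ)) : ℚ) ^ p = ∑ e ∈ Ico 1 c, (e : ℚ) ^ p := by
    apply Finset.sum_nbij' (i := fun d => c - d) (j := fun e => c - e)
    · intro x hx; rw [Finset.mem_Ico] at *; omega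
    · intro x hx; rw [Finset.mem_Ico] at *; omega
    · intro x hx; rw [Finset.mem_Ico] at hx; omega
    · intro x hx; rw [Finset.mem_Ico] at hx; omega
    · intro x hx; rfl
  rw [hre]
  -- relate to the range sum and apply Faulhaber
  have hrange : ∑ e ∈ range c, (e : ℚ) ^ p = (0 : ℚ) ^ p + ∑ e ∈ Ico 1 c, (e : ℚ) ^ p := by
    rw [Finset.range_eq_Ico, ← Finset.insert_Ico_add_one_left_eq_Ico (by omega : 0 < c),
      Finset.sum_insert (by simp)]
    norm_num
  have hF := sum_range_pow c p
  have hmain : ∑ e ∈ Ico 1 c, (e : ℚ) ^ p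
      = (∑ i ∈ range (p + 1), bernoulli i * ((p + 1).choose i : ℚ) * (c : ℚ) ^ (p + 1 - i) / ((p : ℚ) + 1))
        - (0 : ℚ) ^ p := by
    rw [← hF, hrange]; ring
  rw [hmain]
  -- expand Mfun 1 (p+1) c
  unfold Mfun
  rw [show 1 + (p + 1) - 1 = p + 1 by omega]
  rw [Finset.Icc_self, Finset.sum_singleton, lam_one_left]
  -- reindex the last sum : j ↦ i = p + 2 - j
  have hsum3 : ∑ j ∈ Icc 1 (p + 1), lam (p + 1) 1 j * (c : ℚ) ^ (j - 1) / ((j - 1).factorial : ℚ)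
      = ∑ i ∈ Icc 1 (p + 1), bernoulli i * (c : ℚ) ^ (p + 1 - i) / ((i.factorial : ℚ) * ((p + 1 - i).factorial : ℚ)) := by
    apply Finset.sum_nbij' (i := fun j => p + 2 - j) (j := fun i => p + 2 - i)
    · intro x hx; rw [Finset.mem_Icc] at *; omega
    · intro x hx; rw [Finset.mem_Icc] at *; omega
    · intro x hx; rw [Finset.mem_Icc] at hx; omega
    · intro x hx; rw [Finset.mem_Icc] at hx; omega
    · intro j hj
      rw [Finset.mem_Icc] at hj
      rw [lam_shape (p + 1) 1 j (p + 1 - j) (p + 1 - j) (p + 2 - j) (by omega) (by omega) (by omega)]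
      rw [Nat.choose_self, show p + 1 - (p + 2 - j) = j - 1 from by omega]
      norm_num
      ring
  rw [hsum3]
  -- split both index sets
  rw [show range (p + 1) = insert 0 (Icc 1 p) by
        rw [Finset.range_eq_Ico, ← Finset.insert_Ico_add_one_left_eq_Ico (by omega : 0 < p + 1),
          Finset.Ico_add_one_right_eq_Icc, Nat.zero_add],
    Finset.sum_insert (by simp),
    show Icc 1 (p + 1) = insert (p + 1) (Icc 1 p) from (Finset.insert_Icc_right_eq_Icc_add_one (by omega)).symm,
    Finset.sum_insert (by simp)]
  simp only [bernoulli_zero, Nat.choose_zero_right, Nat.cast_one, Nat.sub_zero, one_mul,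
    Nat.sub_self, pow_zero, Nat.factorial_zero, mul_one]
  -- termwise identification on Icc 1 p
  have hterm : ∀ i ∈ Icc 1 p,
      bernoulli i * ((p + 1).choose i : ℚ) * (c : ℚ) ^ (p + 1 - i) / ((p : ℚ) + 1)
        = (p.factorial : ℚ) * (bernoulli i * (c : ℚ) ^ (p + 1 - i) / ((i.factorial : ℚ) * ((p + 1 - i).factorial : ℚ))) := by
    intro i hi
    rw [Finset.mem_Icc] at hi
    have hch : (((p + 1).choose i : ℕ) : ℚ) * (i.factorial : ℚ) * ((p + 1 - i).factorial : ℚ)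
        = ((p + 1).factorial : ℚ) := by
      exact_mod_cast congrArg (fun x : ℕ => (x : ℚ))
        (Nat.choose_mul_factorial_mul_factorial (show i ≤ p + 1 by omega))
    have hfac : ((p + 1).factorial : ℚ) = ((p : ℚ) + 1) * (p.factorial : ℚ) := by
      rw [Nat.factorial_succ]; push_cast; ring
    have h1 : (i.factorial : ℚ) ≠ 0 := by exact_mod_cast i.factorial_ne_zero
    have h2 : ((p + 1 - i).factorial : ℚ) ≠ 0 := by exact_mod_cast (p + 1 - i).factorial_ne_zero
    have h3 : ((p : ℚ) + 1) ≠ 0 := by positivity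
    rw [hfac] at hch
    field_simp
    linear_combination (bernoulli i) * hch
  rw [Finset.sum_congr rfl hterm, ← Finset.mul_sum]
  -- remaining scalar identity
  have hzero : -((0 : ℚ) ^ p) * ((p : ℚ) + 1) = ((-1 : ℚ) ^ p + 1) * bernoulli (p + 1) := by
    rcases Nat.eq_zero_or_pos p with hp | hp
    · subst hp; norm_num [bernoulli_one]
    · rcases Nat.even_or_odd p with he | ho
      · have hodd : Odd (p + 1) := Even.add_one he
        have hne1 : p + 1 ≠ 1 := by omega
        rw [bernoulli_eq_bernoulli'_of_ne_one hne1,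
          bernoulli'_eq_zero_of_odd hodd (by omega)]
        rw [zero_pow (by omega : p ≠ 0)]
        ring
      · rw [Odd.neg_one_pow ho, zero_pow (by omega : p ≠ 0)]
        ring
  have hfac : ((p + 1).factorial : ℚ) = ((p : ℚ) + 1) * (p.factorial : ℚ) := by
    rw [Nat.factorial_succ]; push_cast; ring
  have h3 : ((p : ℚ) + 1) ≠ 0 := by positivity
  have h4 : (p.factorial : ℚ) ≠ 0 := by exact_mod_cast p.factorial_ne_zero
  rw [hfac]
  field_simp
  linear_combination hzero

lemma key : ∀ s, 1 ≤ s → ∀ t, 1 ≤ t → ∀ c : ℕ, 1 ≤ c →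
    ∑ d ∈ Ico 1 c, (d : ℚ) ^ (s - 1) * (((c - d : ℕ)) : ℚ) ^ (t - 1)
      = ((s - 1).factorial : ℚ) * ((t - 1).factorial : ℚ) * Mfun s t c := by
  intro s hs
  induction s, hs using Nat.le_induction with
  | base =>
    intro t ht c hc
    obtain ⟨p, rfl⟩ : ∃ p, t = p + 1 := ⟨t - 1, by omega⟩
    simp only [Nat.sub_self, pow_zero, one_mul, Nat.add_sub_cancel, Nat.factorial_zero,
      Nat.cast_one]
    exact base p c hc
  | succ s hs IH =>
    intro t ht c hc
    have h1 := IH t ht c hc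
    have h2 := IH (t + 1) (by omega) c hc
    have hrec := Mrec s t c hs ht
    -- pointwise identity : c * d^{s-1} (c-d)^{t-1} = d^s (c-d)^{t-1} + d^{s-1} (c-d)^t
    have hpt : ∀ d ∈ Ico 1 c,
        (c : ℚ) * ((d : ℚ) ^ (s - 1) * (((c - d : ℕ)) : ℚ) ^ (t - 1))
          = (d : ℚ) ^ ((s + 1) - 1) * (((c - d : ℕ)) : ℚ) ^ (t - 1)
            + (d : ℚ) ^ (s - 1) * (((c - d : ℕ)) : ℚ) ^ ((t + 1) - 1) := by
      intro d hd
      rw [Finset.mem_Ico] at hd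
      have e1 : (d : ℚ) ^ ((s + 1) - 1) = (d : ℚ) ^ (s - 1) * d := by
        rw [Nat.add_sub_cancel]
        conv_lhs => rw [show s = (s - 1) + 1 by omega, pow_succ]
      have e2 : (((c - d : ℕ)) : ℚ) ^ ((t + 1) - 1) = (((c - d : ℕ)) : ℚ) ^ (t - 1) * ((c - d : ℕ) : ℚ) := by
        rw [Nat.add_sub_cancel]
        conv_lhs => rw [show t = (t - 1) + 1 by omega, pow_succ]
      have e3 : ((d : ℚ)) + ((c - d : ℕ) : ℚ) = (c : ℚ) := by
        have : d + (c - d) = c := by omega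
        exact_mod_cast congrArg (fun x : ℕ => (x : ℚ)) this
      rw [e1, e2, ← e3]
      ring
    have hsum : (c : ℚ) * ∑ d ∈ Ico 1 c, (d : ℚ) ^ (s - 1) * (((c - d : ℕ)) : ℚ) ^ (t - 1)
        = (∑ d ∈ Ico 1 c, (d : ℚ) ^ ((s + 1) - 1) * (((c - d : ℕ)) : ℚ) ^ (t - 1))
          + ∑ d ∈ Ico 1 c, (d : ℚ) ^ (s - 1) * (((c - d : ℕ)) : ℚ) ^ ((t + 1) - 1) := by
      rw [Finset.mul_sum, Finset.sum_congr rfl hpt, Finset.sum_add_distrib]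
    -- put everything together
    have hfs : (((s + 1) - 1).factorial : ℚ) = (s : ℚ) * ((s - 1).factorial : ℚ) := by
      rw [Nat.add_sub_cancel]
      conv_lhs => rw [show s = (s - 1) + 1 by omega, Nat.factorial_succ]
      push_cast [show s - 1 + 1 = s by omega]
      ring
    have hft : (((t + 1) - 1).factorial : ℚ) = (t : ℚ) * ((t - 1).factorial : ℚ) := by
      rw [Nat.add_sub_cancel]
      conv_lhs => rw [show t = (t - 1) + 1 by omega, Nat.factorial_succ]
      push_cast [show t - 1 + 1 = t by omega]
      ring
    rw [hfs]
    rw [h1, h2, hft] at hsum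
    linear_combination -hsum - ((s - 1).factorial : ℚ) * ((t - 1).factorial : ℚ) * hrec



noncomputable def S1 (s N : ℕ) : ℚ := ∑ p ∈ N.divisorsAntidiagonal, (p.2 : ℚ) ^ (s - 1)

def Q (N : ℕ) : Finset ((ℕ × ℕ) × ℕ × ℕ) :=
  ((Icc 1 N ×ˢ Icc 1 N) ×ˢ Icc 1 N ×ˢ Icc 1 N).filter
    (fun q => q.1.1 * q.1.2 + q.2.1 * q.2.2 = N)

lemma mem_Q {N : ℕ} {q : (ℕ × ℕ) × ℕ × ℕ} :
    q ∈ Q N ↔ 0 < q.1.1 ∧ 0 < q.1.2 ∧ 0 < q.2.1 ∧ 0 < q.2.2 ∧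
      q.1.1 * q.1.2 + q.2.1 * q.2.2 = N := by
  simp only [Q, Finset.mem_filter, Finset.mem_product, Finset.mem_Icc]
  constructor
  · rintro ⟨⟨⟨⟨h1, _⟩, h2, _⟩, ⟨h3, _⟩, h4, _⟩, h5⟩
    exact ⟨h1, h2, h3, h4, h5⟩
  · rintro ⟨h1, h2, h3, h4, h5⟩
    have b1 : q.1.1 ≤ q.1.1 * q.1.2 := Nat.le_mul_of_pos_right _ h2
    have b2 : q.1.2 ≤ q.1.1 * q.1.2 := Nat.le_mul_of_pos_left _ h1
    have b3 : q.2.1 ≤ q.2.1 * q.2.2 := Nat.le_mul_of_pos_right _ h4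
    have b4 : q.2.2 ≤ q.2.1 * q.2.2 := Nat.le_mul_of_pos_left _ h3
    exact ⟨⟨⟨⟨h1, by omega⟩, h2, by omega⟩, ⟨h3, by omega⟩, h4, by omega⟩, h5⟩

noncomputable def S2 (s t N : ℕ) : ℚ :=
  ∑ q ∈ (Q N).filter (fun q => q.2.1 < q.1.1), (q.1.2 : ℚ) ^ (s - 1) * (q.2.2 : ℚ) ^ (t - 1)

lemma coeff_one (s N : ℕ) :
    PowerSeries.coeff N (monoBracket ![s]) = (((s - 1).factorial : ℚ))⁻¹ * S1 s N := by
  unfold monoBracket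
  rw [PowerSeries.coeff_mk]
  congr 1
  · rw [Fin.prod_univ_one]
    simp
  -- the finsum
  have hbij : Set.BijOn (fun nd : (Fin 1 → ℕ) × (Fin 1 → ℕ) => (nd.1 0, nd.2 0))
      {nd : (Fin 1 → ℕ) × (Fin 1 → ℕ) |
        StrictAnti nd.1 ∧ (∀ i, 0 < nd.1 i) ∧ (∀ i, 0 < nd.2 i) ∧ ∑ i, nd.1 i * nd.2 i = N}
      ↑(N.divisorsAntidiagonal) := by
    refine ⟨?_, ?_, ?_⟩
    · rintro nd ⟨-, hp1, hp2, hsum⟩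
      rw [Fin.sum_univ_one] at hsum
      simp only [Finset.coe_sort_coe, Finset.mem_coe, Nat.mem_divisorsAntidiagonal]
      exact ⟨hsum, hsum ▸ (Nat.mul_pos (hp1 0) (hp2 0)).ne'⟩
    · rintro a - b - h
      simp only [Prod.mk.injEq] at h
      refine Prod.ext (funext fun x => ?_) (funext fun x => ?_)
      · rw [Subsingleton.elim x 0]; exact h.1
      · rw [Subsingleton.elim x 0]; exact h.2
    · rintro p hp
      simp only [Finset.coe_sort_coe, Finset.mem_coe, Nat.mem_divisorsAntidiagonal] at hp
      refine ⟨(fun _ => p.1, fun _ => p.2), ⟨?_, ?_, ?_, ?_⟩, rfl⟩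
      · intro i j hij
        rw [Subsingleton.elim i j] at hij
        exact absurd hij (lt_irrefl j)
      · intro i
        exact Nat.pos_of_ne_zero fun h => hp.2 (by rw [← hp.1, show p.1 = 0 from h, zero_mul])
      · intro i
        exact Nat.pos_of_ne_zero fun h => hp.2 (by rw [← hp.1, show p.2 = 0 from h, mul_zero])
      · rw [Fin.sum_univ_one]; exact hp.1
  rw [finsum_mem_eq_of_bijOn (g := fun p : ℕ × ℕ => (p.2 : ℚ) ^ (s - 1)) _ hbij
    (fun nd _ => by rw [Fin.prod_univ_one]; simp)]
  rw [finsum_mem_coe_finset]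
  rfl

lemma strictAnti_fin2 {f : Fin 2 → ℕ} (h : f 1 < f 0) : StrictAnti f := by
  intro i j hij
  have hi := i.isLt
  have hj := j.isLt
  have hij' : i.val < j.val := hij
  have : i = 0 := Fin.ext (by omega)
  have : j = 1 := Fin.ext (by omega)
  subst this; subst ‹i = 0›
  exact h

lemma coeff_two (s t N : ℕ) :
    PowerSeries.coeff N (monoBracket ![s, t])
      = (((s - 1).factorial : ℚ))⁻¹ * (((t - 1).factorial : ℚ))⁻¹ * S2 s t N := by
  unfold monoBracket
  rw [PowerSeries.coeff_mk]
  rw [show (∏ i, (((![s, t] : Fin 2 → ℕ) i - 1).factorial : ℚ))⁻¹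
      = (((s - 1).factorial : ℚ))⁻¹ * (((t - 1).factorial : ℚ))⁻¹ by
    rw [Fin.prod_univ_two]; simp [mul_inv, mul_comm]]
  rw [mul_assoc, mul_assoc]
  congr 2
  have hbij : Set.BijOn
      (fun nd : (Fin 2 → ℕ) × (Fin 2 → ℕ) => ((nd.1 0, nd.2 0), (nd.1 1, nd.2 1)))
      {nd : (Fin 2 → ℕ) × (Fin 2 → ℕ) |
        StrictAnti nd.1 ∧ (∀ i, 0 < nd.1 i) ∧ (∀ i, 0 < nd.2 i) ∧ ∑ i, nd.1 i * nd.2 i = N}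
      ↑((Q N).filter (fun q => q.2.1 < q.1.1)) := by
    refine ⟨?_, ?_, ?_⟩
    · rintro nd ⟨hanti, hp1, hp2, hsum⟩
      rw [Fin.sum_univ_two] at hsum
      simp only [Finset.coe_sort_coe, Finset.mem_coe, Finset.mem_filter]
      exact ⟨mem_Q.2 ⟨hp1 0, hp2 0, hp1 1, hp2 1, hsum⟩,
        hanti (show (0 : Fin 2) < 1 by decide)⟩
    · rintro a - b - h
      simp only [Prod.mk.injEq] at h
      refine Prod.ext (funext fun x => ?_) (funext fun x => ?_)
      · fin_cases x
        · exact h.1.1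
        · exact h.2.1
      · fin_cases x
        · exact h.1.2
        · exact h.2.2
    · rintro q hq
      simp only [Finset.coe_sort_coe, Finset.mem_coe, Finset.mem_filter] at hq
      obtain ⟨hqQ, hlt⟩ := hq
      obtain ⟨h1, h2, h3, h4, h5⟩ := mem_Q.1 hqQ
      refine ⟨(![q.1.1, q.2.1], ![q.1.2, q.2.2]), ⟨?_, ?_, ?_, ?_⟩, ?_⟩
      · apply strictAnti_fin2
        simpa using hlt
      · intro i
        match i with
        | ⟨0, _⟩ => simpa using h1
        | ⟨1, _⟩ => simpa using h3
      · intro i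
        match i with
        | ⟨0, _⟩ => simpa using h2
        | ⟨1, _⟩ => simpa using h4
      · rw [Fin.sum_univ_two]; simpa using h5
      · simp
  rw [finsum_mem_eq_of_bijOn
    (g := fun q : (ℕ × ℕ) × ℕ × ℕ => (q.1.2 : ℚ) ^ (s - 1) * (q.2.2 : ℚ) ^ (t - 1)) _ hbij
    (fun nd _ => by rw [Fin.prod_univ_two]; simp)]
  rw [finsum_mem_coe_finset]
  rfl

lemma hLHS (s t N : ℕ) :
    PowerSeries.coeff N (monoBracket ![s] * monoBracket ![t])
      = (((s - 1).factorial : ℚ))⁻¹ * (((t - 1).factorial : ℚ))⁻¹ *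
          ∑ q ∈ Q N, (q.1.2 : ℚ) ^ (s - 1) * (q.2.2 : ℚ) ^ (t - 1) := by
  rw [PowerSeries.coeff_mul]
  have h1 : ∀ p ∈ Finset.HasAntidiagonal.antidiagonal N,
      PowerSeries.coeff p.1 (monoBracket ![s]) * PowerSeries.coeff p.2 (monoBracket ![t])
        = (((s - 1).factorial : ℚ))⁻¹ * (((t - 1).factorial : ℚ))⁻¹ * (S1 s p.1 * S1 t p.2) := by
    intro p _
    rw [coeff_one, coeff_one]
    ring
  rw [Finset.sum_congr rfl h1, ← Finset.mul_sum]
  congr 1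
  have hmaps : ∀ q ∈ Q N, (q.1.1 * q.1.2, q.2.1 * q.2.2) ∈ Finset.HasAntidiagonal.antidiagonal N := by
    intro q hq
    rw [Finset.HasAntidiagonal.mem_antidiagonal]
    exact (mem_Q.1 hq).2.2.2.2
  rw [← Finset.sum_fiberwise_of_maps_to hmaps
    (fun q => (q.1.2 : ℚ) ^ (s - 1) * (q.2.2 : ℚ) ^ (t - 1))]
  apply Finset.sum_congr rfl
  intro p hp
  rw [Finset.HasAntidiagonal.mem_antidiagonal] at hp
  have hset : (Q N).filter (fun q => (q.1.1 * q.1.2, q.2.1 * q.2.2) = p)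
      = p.1.divisorsAntidiagonal ×ˢ p.2.divisorsAntidiagonal := by
    ext q
    simp only [Finset.mem_filter, Finset.mem_product, Nat.mem_divisorsAntidiagonal,
      Prod.ext_iff, mem_Q]
    constructor
    · rintro ⟨⟨h1, h2, h3, h4, h5⟩, h6, h7⟩
      exact ⟨⟨h6, by rw [← h6]; exact (Nat.mul_pos h1 h2).ne'⟩,
        ⟨h7, by rw [← h7]; exact (Nat.mul_pos h3 h4).ne'⟩⟩
    · rintro ⟨⟨h6, h6'⟩, h7, h7'⟩
      have a1 : q.1.1 * q.1.2 ≠ 0 := by rw [h6]; exact h6'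
      have a2 : q.2.1 * q.2.2 ≠ 0 := by rw [h7]; exact h7'
      obtain ⟨b1, b2⟩ := Nat.mul_ne_zero_iff.1 a1
      obtain ⟨b3, b4⟩ := Nat.mul_ne_zero_iff.1 a2
      exact ⟨⟨Nat.pos_of_ne_zero b1, Nat.pos_of_ne_zero b2, Nat.pos_of_ne_zero b3,
        Nat.pos_of_ne_zero b4, by rw [h6, h7]; exact hp⟩, h6, h7⟩
  rw [hset, Finset.sum_product]
  unfold S1
  rw [Finset.sum_mul_sum]

lemma hswap (s t N : ℕ) :
    ∑ q ∈ (Q N).filter (fun q => q.1.1 < q.2.1),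
        (q.1.2 : ℚ) ^ (s - 1) * (q.2.2 : ℚ) ^ (t - 1)
      = S2 t s N := by
  unfold S2
  apply Finset.sum_nbij' (i := Prod.swap) (j := Prod.swap)
  · rintro ⟨⟨n, d⟩, ⟨m, e⟩⟩ hq
    simp only [Finset.mem_filter, mem_Q] at hq ⊢
    obtain ⟨⟨h1, h2, h3, h4, h5⟩, h6⟩ := hq
    exact ⟨⟨h3, h4, h1, h2, by rw [Nat.add_comm]; exact h5⟩, h6⟩
  · rintro ⟨⟨n, d⟩, ⟨m, e⟩⟩ hq
    simp only [Finset.mem_filter, mem_Q] at hq ⊢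
    obtain ⟨⟨h1, h2, h3, h4, h5⟩, h6⟩ := hq
    exact ⟨⟨h3, h4, h1, h2, by rw [Nat.add_comm]; exact h5⟩, h6⟩
  · rintro ⟨⟨n, d⟩, ⟨m, e⟩⟩ _; rfl
  · rintro ⟨⟨n, d⟩, ⟨m, e⟩⟩ _; rfl
  · rintro ⟨⟨n, d⟩, ⟨m, e⟩⟩ _
    exact mul_comm _ _

lemma hdiag (s t N : ℕ) :
    ∑ q ∈ (Q N).filter (fun q => q.1.1 = q.2.1),
        (q.1.2 : ℚ) ^ (s - 1) * (q.2.2 : ℚ) ^ (t - 1)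
      = ∑ p ∈ N.divisorsAntidiagonal, ∑ d ∈ Ico 1 p.2,
          (d : ℚ) ^ (s - 1) * (((p.2 - d : ℕ)) : ℚ) ^ (t - 1) := by
  refine Eq.trans ?_ (Finset.sum_sigma (N.divisorsAntidiagonal) (fun p => Ico 1 p.2)
    (fun x => ((x.2 : ℚ)) ^ (s - 1) * (((x.1.2 - x.2 : ℕ)) : ℚ) ^ (t - 1)))
  apply Finset.sum_nbij'
    (i := fun q => ⟨(q.1.1, q.1.2 + q.2.2), q.1.2⟩)
    (j := fun x => ((x.1.1, x.2), (x.1.1, x.1.2 - x.2)))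
  · rintro ⟨⟨n, d⟩, ⟨m, e⟩⟩ hq
    simp only [Finset.mem_filter, mem_Q] at hq
    obtain ⟨⟨h1, h2, h3, h4, h5⟩, h6⟩ := hq
    subst h6
    simp only [Finset.mem_sigma, Nat.mem_divisorsAntidiagonal, Finset.mem_Ico]
    refine ⟨⟨by rw [Nat.mul_add]; exact h5, ?_⟩, by omega, by omega⟩
    have := Nat.mul_pos h1 h2
    omega
  · rintro ⟨⟨n, c⟩, d⟩ hx
    simp only [Finset.mem_sigma, Nat.mem_divisorsAntidiagonal, Finset.mem_Ico] at hx
    obtain ⟨⟨hprod, hN0⟩, hd1, hdc⟩ := hx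
    simp only [Finset.mem_filter, mem_Q]
    have hn : 0 < n := Nat.pos_of_ne_zero (by
      rintro rfl; rw [zero_mul] at hprod; exact hN0 hprod.symm)
    refine ⟨⟨hn, by omega, hn, by omega, ?_⟩, trivial⟩
    rw [← Nat.mul_add, show d + (c - d) = c by omega]
    exact hprod
  · rintro ⟨⟨n, d⟩, ⟨m, e⟩⟩ hq
    simp only [Finset.mem_filter, mem_Q] at hq
    obtain ⟨⟨-, h2, -, h4, -⟩, h6⟩ := hq
    subst h6
    rw [show d + e - d = e from by omega]
  · rintro ⟨⟨n, c⟩, d⟩ hx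
    simp only [Finset.mem_sigma, Nat.mem_divisorsAntidiagonal, Finset.mem_Ico] at hx
    obtain ⟨-, hd1, hdc⟩ := hx
    rw [show d + (c - d) = c from by omega]
  · rintro ⟨⟨n, d⟩, ⟨m, e⟩⟩ _
    simp only
    rw [show d + e - d = e by omega]

lemma hM (s t N : ℕ) :
    ∑ p ∈ N.divisorsAntidiagonal, Mfun s t p.2
      = ((s + t - 1).factorial : ℚ)⁻¹ * S1 (s + t) N
        + (∑ j ∈ Icc 1 s, lam s t j * (((j - 1).factorial : ℚ)⁻¹ * S1 j N))
        + (∑ j ∈ Icc 1 t, lam t s j * (((j - 1).factorial : ℚ)⁻¹ * S1 j N)) := by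
  unfold Mfun S1
  rw [Finset.sum_add_distrib, Finset.sum_add_distrib]
  congr 1
  · congr 1
    · rw [Finset.mul_sum]
      apply Finset.sum_congr rfl
      intro p _
      rw [div_eq_mul_inv]
      ring
    · rw [Finset.sum_comm]
      apply Finset.sum_congr rfl
      intro j _
      rw [Finset.mul_sum, Finset.mul_sum]
      apply Finset.sum_congr rfl
      intro p _
      rw [div_eq_mul_inv]
      ring
  · rw [Finset.sum_comm]
    apply Finset.sum_congr rfl
    intro j _
    rw [Finset.mul_sum, Finset.mul_sum]
    apply Finset.sum_congr rfl
    intro p _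
    rw [div_eq_mul_inv]
    ring

/-- **Product of two length-1 mono-brackets**: for `s, t ≥ 1`,
`[s]·[t] = [s,t] + [t,s] + [s+t] + Σ_{j=1}^s λ^j_{s,t}[j] + Σ_{j=1}^t λ^j_{t,s}[j]`
in `ℚ⟦q⟧`. -/
theorem monoBracket_mul (s t : ℕ) (hs : 1 ≤ s) (ht : 1 ≤ t) :
    monoBracket ![s] * monoBracket ![t] =
      monoBracket ![s, t] + monoBracket ![t, s] + monoBracket ![s + t] +
        (∑ j ∈ Finset.Icc 1 s, lam s t j • monoBracket ![j]) +
        (∑ j ∈ Finset.Icc 1 t, lam t s j • monoBracket ![j]) := by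
  apply PowerSeries.ext
  intro N
  rw [map_add, map_add, map_add, map_add, map_sum, map_sum]
  simp only [map_smul, smul_eq_mul]
  rw [hLHS s t N, coeff_two s t N, coeff_two t s N, coeff_one (s + t) N]
  rw [Finset.sum_congr rfl (fun j _ => by rw [coeff_one] :
    ∀ j ∈ Finset.Icc 1 s, lam s t j * PowerSeries.coeff N (monoBracket ![j])
      = lam s t j * (((j - 1).factorial : ℚ)⁻¹ * S1 j N))]
  rw [Finset.sum_congr rfl (fun j _ => by rw [coeff_one] :
    ∀ j ∈ Finset.Icc 1 t, lam t s j * PowerSeries.coeff N (monoBracket ![j])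
      = lam t s j * (((j - 1).factorial : ℚ)⁻¹ * S1 j N))]
  -- split the big sum into three parts
  have hsplit : ∑ q ∈ Q N, (q.1.2 : ℚ) ^ (s - 1) * (q.2.2 : ℚ) ^ (t - 1)
      = S2 s t N
        + (∑ q ∈ (Q N).filter (fun q => q.1.1 < q.2.1),
            (q.1.2 : ℚ) ^ (s - 1) * (q.2.2 : ℚ) ^ (t - 1))
        + ∑ q ∈ (Q N).filter (fun q => q.1.1 = q.2.1),
            (q.1.2 : ℚ) ^ (s - 1) * (q.2.2 : ℚ) ^ (t - 1) := by
    rw [← Finset.sum_filter_add_sum_filter_not (Q N) (fun q => q.2.1 < q.1.1)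
      (fun q => (q.1.2 : ℚ) ^ (s - 1) * (q.2.2 : ℚ) ^ (t - 1))]
    rw [add_assoc]
    congr 1
    rw [← Finset.sum_filter_add_sum_filter_not ((Q N).filter (fun q => ¬ q.2.1 < q.1.1))
      (fun q => q.1.1 < q.2.1)
      (fun q => (q.1.2 : ℚ) ^ (s - 1) * (q.2.2 : ℚ) ^ (t - 1))]
    rw [Finset.filter_filter, Finset.filter_filter]
    congr 1
    · apply Finset.sum_congr _ (fun _ _ => rfl)
      apply Finset.filter_congr
      intro q _
      constructor
      · exact fun h => h.2
      · exact fun h => ⟨by omega, h⟩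
    · apply Finset.sum_congr _ (fun _ _ => rfl)
      apply Finset.filter_congr
      intro q _
      constructor
      · rintro ⟨h1, h2⟩; omega
      · intro h; omega
  rw [hsplit, hswap s t N, hdiag s t N]
  -- diagonal evaluation via the key lemma
  have hfs : ((s - 1).factorial : ℚ) ≠ 0 := by exact_mod_cast (s - 1).factorial_ne_zero
  have hft : ((t - 1).factorial : ℚ) ≠ 0 := by exact_mod_cast (t - 1).factorial_ne_zero
  have hdval : ∀ p ∈ N.divisorsAntidiagonal,
      ∑ d ∈ Ico 1 p.2, (d : ℚ) ^ (s - 1) * (((p.2 - d : ℕ)) : ℚ) ^ (t - 1)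
        = ((s - 1).factorial : ℚ) * ((t - 1).factorial : ℚ) * Mfun s t p.2 := by
    intro p hp
    have hp2 : 1 ≤ p.2 :=
      Nat.pos_of_ne_zero (Nat.ne_zero_of_mem_divisorsAntidiagonal hp).2
    exact key s hs t ht p.2 hp2
  rw [Finset.sum_congr rfl hdval, ← Finset.mul_sum, hM s t N]
  field_simp
  ring
end

section
/- (Partition relation in length 1) For every integer s ≥ 1 and every integer r ≥ 0, the bi-brackets satisfy the identity of formal power series [s ; r] = [r+1 ; s−1] in ℚ⟦q⟧. -/
/-- The bi-bracket `[s_1, …, s_l ; r_1, …, r_l] ∈ ℚ⟦q⟧`: the coefficient of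
`q^N` is `(∏ r_i!(s_i-1)!)⁻¹ Σ ∏ u_i^{r_i} v_i^{s_i-1}` over `u_1 > ⋯ > u_l ≥ 1`,
`v_i ≥ 1` with `Σ u_i v_i = N` (a finite sum). -/
noncomputable def biBracket {l : ℕ} (s r : Fin l → ℕ) : PowerSeries ℚ :=
  PowerSeries.mk fun N =>
    (∏ i, ((r i).factorial * (s i - 1).factorial : ℚ))⁻¹ *
      ∑ᶠ uv ∈ {uv : (Fin l → ℕ) × (Fin l → ℕ) |
          StrictAnti uv.1 ∧ (∀ i, 0 < uv.1 i) ∧ (∀ i, 0 < uv.2 i) ∧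
            ∑ i, uv.1 i * uv.2 i = N},
        ∏ i, (uv.1 i : ℚ) ^ r i * (uv.2 i : ℚ) ^ (s i - 1)

/-- **Partition relation in length 1**: for `s ≥ 1` and `r ≥ 0`,
`[s ; r] = [r+1 ; s-1]` in `ℚ⟦q⟧`. -/
theorem biBracket_partition_length_one (s r : ℕ) (hs : 1 ≤ s) :
    biBracket ![s] ![r] = biBracket ![r + 1] ![s - 1] := by
  ext N
  simp only [biBracket, PowerSeries.coeff_mk]
  have hanti : ∀ f : Fin 1 → ℕ, StrictAnti f := by
    intro f a b h
    exact absurd (Subsingleton.elim a b) h.ne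
  congr 1
  · simp [mul_comm]
  · refine finsum_mem_eq_of_bijOn Prod.swap ⟨?_, ?_, ?_⟩ ?_
    · rintro ⟨u, v⟩ ⟨-, hu, hv, hsum⟩
      refine ⟨hanti _, hv, hu, ?_⟩
      simpa [mul_comm] using hsum
    · rintro ⟨u, v⟩ - ⟨u', v'⟩ - h
      simpa [Prod.ext_iff, and_comm] using h
    · rintro ⟨u, v⟩ ⟨-, hu, hv, hsum⟩
      refine ⟨⟨v, u⟩, ⟨hanti _, hv, hu, ?_⟩, rfl⟩
      simpa [mul_comm] using hsum
    · rintro ⟨u, v⟩ -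
      simp [mul_comm]
end

section
/- (Partition relation in length 2) For all integers s_1, s_2 ≥ 1 and r_1, r_2 ≥ 0, the following identity of formal power series holds in ℚ⟦q⟧: [s_1, s_2 ; r_1, r_2] = Σ_{0 ≤ j ≤ r_1} Σ_{0 ≤ k ≤ s_2−1} (−1)^k · C(s_1−1+k, k) · C(r_2+j, j) · [r_2+1+j, r_1+1−j ; s_2−1−k, s_1−1+k]. -/
namespace BiBracketAux

open Finset

/-- The finite index set of pairs `(u, v)` with `u 1 < u 0`, all entries in `(0, N]`,
and `u 0 * v 0 + u 1 * v 1 = N`. -/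
noncomputable def idxF (N : ℕ) : Finset ((Fin 2 → ℕ) × (Fin 2 → ℕ)) :=
  ((Fintype.piFinset fun _ : Fin 2 => Finset.Ioc 0 N) ×ˢ
      Fintype.piFinset fun _ : Fin 2 => Finset.Ioc 0 N).filter
    fun uv => uv.1 1 < uv.1 0 ∧ uv.1 0 * uv.2 0 + uv.1 1 * uv.2 1 = N

lemma mem_idxF {N : ℕ} {uv : (Fin 2 → ℕ) × (Fin 2 → ℕ)} :
    uv ∈ idxF N ↔ (∀ i, 0 < uv.1 i ∧ uv.1 i ≤ N) ∧ (∀ i, 0 < uv.2 i ∧ uv.2 i ≤ N) ∧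
      uv.1 1 < uv.1 0 ∧ uv.1 0 * uv.2 0 + uv.1 1 * uv.2 1 = N := by
  simp [idxF, Fintype.mem_piFinset, Finset.mem_Ioc, and_assoc]

lemma setEq (N : ℕ) :
    {uv : (Fin 2 → ℕ) × (Fin 2 → ℕ) |
        StrictAnti uv.1 ∧ (∀ i, 0 < uv.1 i) ∧ (∀ i, 0 < uv.2 i) ∧
          ∑ i, uv.1 i * uv.2 i = N} = ↑(idxF N) := by
  ext ⟨u, v⟩
  simp only [Set.mem_setOf_eq, Finset.mem_coe, mem_idxF, Fin.sum_univ_two]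
  constructor
  · rintro ⟨hanti, hu, hv, hsum⟩
    have h10 : u 1 < u 0 := hanti (show (0 : Fin 2) < 1 by decide)
    have h0 : u 0 * v 0 ≤ N := hsum ▸ Nat.le_add_right _ _
    have h1 : u 1 * v 1 ≤ N := hsum ▸ Nat.le_add_left _ _
    have hb : ∀ i, u i * v i ≤ N := by
      intro i; fin_cases i
      · exact h0
      · exact h1
    refine ⟨fun i => ⟨hu i, ?_⟩, fun i => ⟨hv i, ?_⟩, h10, hsum⟩
    · exact le_trans (Nat.le_mul_of_pos_right _ (hv i)) (hb i)
    · exact le_trans (Nat.le_mul_of_pos_left _ (hu i)) (hb i)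
  · rintro ⟨hu, hv, h10, hsum⟩
    refine ⟨?_, fun i => (hu i).1, fun i => (hv i).1, hsum⟩
    intro a b hab
    fin_cases a <;> fin_cases b
    · exact absurd hab (lt_irrefl _)
    · exact h10
    · exact absurd hab (by decide)
    · exact absurd hab (lt_irrefl _)

lemma coeff_biBracket (s r : Fin 2 → ℕ) (N : ℕ) :
    PowerSeries.coeff N (biBracket s r) =
      (∏ i, ((r i).factorial * (s i - 1).factorial : ℚ))⁻¹ *
        ∑ uv ∈ idxF N, ∏ i, (uv.1 i : ℚ) ^ r i * (uv.2 i : ℚ) ^ (s i - 1) := by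
  rw [biBracket, PowerSeries.coeff_mk, setEq N, finsum_mem_coe_finset]

/-- The conjugation involution. -/
def rho (uv : (Fin 2 → ℕ) × (Fin 2 → ℕ)) : (Fin 2 → ℕ) × (Fin 2 → ℕ) :=
  (![uv.2 0 + uv.2 1, uv.2 0], ![uv.1 1, uv.1 0 - uv.1 1])

lemma rho_mem {N : ℕ} {uv : (Fin 2 → ℕ) × (Fin 2 → ℕ)} (h : uv ∈ idxF N) :
    rho uv ∈ idxF N := by
  obtain ⟨u, v⟩ := uv
  rw [mem_idxF] at h ⊢
  obtain ⟨hu, hv, hlt, hsum⟩ := h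
  have hle : u 1 ≤ u 0 := hlt.le
  have key : (v 0 + v 1) * u 1 + v 0 * (u 0 - u 1) = u 0 * v 0 + u 1 * v 1 := by
    zify [hle]; ring
  have b1 : v 0 + v 1 ≤ N :=
    calc v 0 + v 1 ≤ (v 0 + v 1) * u 1 := Nat.le_mul_of_pos_right _ (hu 1).1
      _ ≤ (v 0 + v 1) * u 1 + v 0 * (u 0 - u 1) := Nat.le_add_right _ _
      _ = u 0 * v 0 + u 1 * v 1 := key
      _ = N := hsum
  refine ⟨fun i => ?_, fun i => ?_, ?_, ?_⟩
  · fin_cases i <;> simp only [rho, Matrix.cons_val_zero, Matrix.cons_val_one, Matrix.head_cons]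
    · exact ⟨Nat.add_pos_left (hv 0).1 _, b1⟩
    · exact hv 0
  · fin_cases i <;> simp only [rho, Matrix.cons_val_zero, Matrix.cons_val_one, Matrix.head_cons]
    · exact hu 1
    · exact ⟨Nat.sub_pos_of_lt hlt, le_trans (Nat.sub_le _ _) (hu 0).2⟩
  · have hpos : 0 < v 1 := (hv 1).1
    simp only [rho, Matrix.cons_val_zero, Matrix.cons_val_one, Matrix.head_cons]
    omega
  · simpa [rho] using key.trans hsum

lemma rho_rho {N : ℕ} {uv : (Fin 2 → ℕ) × (Fin 2 → ℕ)} (h : uv ∈ idxF N) :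
    rho (rho uv) = uv := by
  obtain ⟨u, v⟩ := uv
  have hle : u 1 ≤ u 0 := (mem_idxF.mp h).2.2.1.le
  refine Prod.ext ?_ ?_ <;> funext i <;> fin_cases i <;> simp [rho] <;> omega

lemma sum_rho (N a b c d : ℕ) :
    ∑ uv ∈ idxF N, (uv.1 0 : ℚ) ^ a * (uv.1 1 : ℚ) ^ b * (uv.2 0 : ℚ) ^ c * (uv.2 1 : ℚ) ^ d
      = ∑ uv ∈ idxF N, ((uv.2 0 : ℚ) + (uv.2 1 : ℚ)) ^ a * (uv.2 0 : ℚ) ^ b *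
          (uv.1 1 : ℚ) ^ c * ((uv.1 0 : ℚ) - (uv.1 1 : ℚ)) ^ d := by
  refine Finset.sum_nbij' rho rho (fun uv h => rho_mem h) (fun uv h => rho_mem h)
    (fun uv h => rho_rho h) (fun uv h => rho_rho h) ?_
  intro uv h
  have hle : uv.1 1 ≤ uv.1 0 := (mem_idxF.mp h).2.2.1.le
  simp only [rho, Matrix.cons_val_zero, Matrix.cons_val_one, Matrix.head_cons]
  rw [Nat.cast_sub hle]
  push_cast
  ring

lemma sub_pow' (x y : ℚ) (n : ℕ) :
    (x - y) ^ n = ∑ k ∈ range (n + 1), (-1 : ℚ) ^ k * (n.choose k : ℚ) * x ^ (n - k) * y ^ k := by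
  rw [sub_pow, ← Finset.sum_range_reflect]
  refine Finset.sum_congr rfl fun k hk => ?_
  have hkn : k ≤ n := Nat.lt_succ_iff.mp (Finset.mem_range.mp hk)
  have h1 : n + 1 - 1 - k = n - k := by omega
  rw [h1]
  have h2 : ((-1 : ℚ)) ^ (n - k + n) = (-1) ^ k := by
    have : n - k + n = k + 2 * (n - k) := by omega
    rw [this, pow_add, pow_mul, neg_one_sq, one_pow, mul_one]
  rw [h2, Nat.sub_sub_self hkn, Nat.choose_symm hkn]
  ring

lemma lhs_sum (N r₁ r₂ a b : ℕ) :
    (∑ uv ∈ idxF N, (uv.1 0 : ℚ) ^ r₁ * (uv.2 0 : ℚ) ^ a *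
        ((uv.1 1 : ℚ) ^ r₂ * (uv.2 1 : ℚ) ^ b))
      = ∑ j ∈ range (r₁ + 1), ∑ k ∈ range (b + 1),
          (r₁.choose j : ℚ) * ((-1 : ℚ) ^ k * (b.choose k : ℚ)) *
            ∑ uv ∈ idxF N, (uv.1 0 : ℚ) ^ (b - k) * (uv.2 0 : ℚ) ^ (r₂ + j) *
              ((uv.1 1 : ℚ) ^ (a + k) * (uv.2 1 : ℚ) ^ (r₁ - j)) := by
  calc
    _ = ∑ uv ∈ idxF N, (uv.1 0 : ℚ) ^ r₁ * (uv.1 1 : ℚ) ^ r₂ * (uv.2 0 : ℚ) ^ a *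
          (uv.2 1 : ℚ) ^ b := Finset.sum_congr rfl fun uv _ => by ring
    _ = ∑ uv ∈ idxF N, ((uv.2 0 : ℚ) + (uv.2 1 : ℚ)) ^ r₁ * (uv.2 0 : ℚ) ^ r₂ *
          (uv.1 1 : ℚ) ^ a * ((uv.1 0 : ℚ) - (uv.1 1 : ℚ)) ^ b := sum_rho N r₁ r₂ a b
    _ = ∑ uv ∈ idxF N, ∑ j ∈ range (r₁ + 1), ∑ k ∈ range (b + 1),
          ((uv.2 0 : ℚ) ^ j * (uv.2 1 : ℚ) ^ (r₁ - j) * (r₁.choose j : ℚ) * (uv.2 0 : ℚ) ^ r₂ *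
            (uv.1 1 : ℚ) ^ a) *
            ((-1 : ℚ) ^ k * (b.choose k : ℚ) * (uv.1 0 : ℚ) ^ (b - k) * (uv.1 1 : ℚ) ^ k) := by
        refine Finset.sum_congr rfl fun uv _ => ?_
        rw [add_pow, sub_pow']
        rw [Finset.sum_mul, Finset.sum_mul, Finset.sum_mul]
        exact Finset.sum_congr rfl fun j _ => by rw [Finset.mul_sum]
    _ = ∑ j ∈ range (r₁ + 1), ∑ k ∈ range (b + 1), ∑ uv ∈ idxF N,
          ((uv.2 0 : ℚ) ^ j * (uv.2 1 : ℚ) ^ (r₁ - j) * (r₁.choose j : ℚ) * (uv.2 0 : ℚ) ^ r₂ *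
            (uv.1 1 : ℚ) ^ a) *
            ((-1 : ℚ) ^ k * (b.choose k : ℚ) * (uv.1 0 : ℚ) ^ (b - k) * (uv.1 1 : ℚ) ^ k) := by
        rw [Finset.sum_comm]
        exact Finset.sum_congr rfl fun j _ => Finset.sum_comm
    _ = _ := by
        refine Finset.sum_congr rfl fun j _ => Finset.sum_congr rfl fun k _ => ?_
        rw [Finset.mul_sum]
        refine Finset.sum_congr rfl fun uv _ => ?_
        rw [pow_add, pow_add]
        ring

lemma key_scalar (r₁ r₂ a b j k : ℕ) (hj : j ≤ r₁) (hk : k ≤ b) :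
    ((r₁.factorial * a.factorial : ℚ) * (r₂.factorial * b.factorial : ℚ))⁻¹ *
        ((r₁.choose j : ℚ) * ((-1 : ℚ) ^ k * (b.choose k : ℚ)))
      = (-1 : ℚ) ^ k * ((a + k).choose k : ℚ) * ((r₂ + j).choose j : ℚ) *
          (((b - k).factorial * (r₂ + j).factorial : ℚ) *
            ((a + k).factorial * (r₁ - j).factorial : ℚ))⁻¹ := by
  rw [Nat.cast_choose ℚ hj, Nat.cast_choose ℚ hk, Nat.cast_choose ℚ (Nat.le_add_left k a),
    Nat.cast_choose ℚ (Nat.le_add_left j r₂), Nat.add_sub_cancel, Nat.add_sub_cancel]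
  have h := fun n : ℕ => (Nat.cast_ne_zero (R := ℚ)).mpr n.factorial_ne_zero
  field_simp

end BiBracketAux

open Finset BiBracketAux in
/-- **Partition relation in length 2**: for `s_1, s_2 ≥ 1` and `r_1, r_2 ≥ 0`,
`[s_1, s_2 ; r_1, r_2] = Σ_{0 ≤ j ≤ r_1} Σ_{0 ≤ k ≤ s_2-1} (-1)^k C(s_1-1+k, k)
C(r_2+j, j) [r_2+1+j, r_1+1-j ; s_2-1-k, s_1-1+k]` in `ℚ⟦q⟧`. -/
theorem biBracket_partition_length_two (s₁ s₂ r₁ r₂ : ℕ)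
    (hs₁ : 1 ≤ s₁) (hs₂ : 1 ≤ s₂) :
    biBracket ![s₁, s₂] ![r₁, r₂] =
      ∑ j ∈ Finset.range (r₁ + 1), ∑ k ∈ Finset.range s₂,
        ((-1 : ℚ) ^ k * ((s₁ - 1 + k).choose k : ℚ) * ((r₂ + j).choose j : ℚ)) •
          biBracket ![r₂ + 1 + j, r₁ + 1 - j] ![s₂ - 1 - k, s₁ - 1 + k] := by
  obtain ⟨a, rfl⟩ : ∃ a, s₁ = a + 1 := ⟨s₁ - 1, by omega⟩
  obtain ⟨b, rfl⟩ : ∃ b, s₂ = b + 1 := ⟨s₂ - 1, by omega⟩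
  refine PowerSeries.ext fun N => ?_
  simp only [map_sum, map_smul, smul_eq_mul, coeff_biBracket, Fin.prod_univ_two,
    Matrix.cons_val_zero, Matrix.cons_val_one, Matrix.head_cons, Nat.add_sub_cancel]
  rw [lhs_sum N r₁ r₂ a b, Finset.mul_sum]
  refine Finset.sum_congr rfl fun j hj => ?_
  rw [Finset.mul_sum]
  refine Finset.sum_congr rfl fun k hk => ?_
  have hj' : j ≤ r₁ := Nat.lt_succ_iff.mp (Finset.mem_range.mp hj)
  have hk' : k ≤ b := Nat.lt_succ_iff.mp (Finset.mem_range.mp hk)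
  have e1 : r₂ + 1 + j - 1 = r₂ + j := by omega
  have e2 : r₁ + 1 - j - 1 = r₁ - j := by omega
  rw [e1, e2]
  have key := key_scalar r₁ r₂ a b j k hj' hk'
  linear_combination
    (∑ uv ∈ idxF N, (uv.1 0 : ℚ) ^ (b - k) * (uv.2 0 : ℚ) ^ (r₂ + j) *
      ((uv.1 1 : ℚ) ^ (a + k) * (uv.2 1 : ℚ) ^ (r₁ - j))) * key
end

section
/- (Stuffle product for length-1 bi-brackets) For all integers s_1, s_2 ≥ 1 and r_1, r_2 ≥ 0, the following identity of formal power series holds in ℚ⟦q⟧: [s_1 ; r_1]·[s_2 ; r_2] = [s_1, s_2 ; r_1, r_2] + [s_2, s_1 ; r_2, r_1] + C(r_1+r_2, r_1)·[s_1+s_2 ; r_1+r_2] + C(r_1+r_2, r_1)·Σ_{j=1}^{s_1} λ^j_{s_1,s_2}·[j ; r_1+r_2] + C(r_1+r_2, r_1)·Σ_{j=1}^{s_2} λ^j_{s_2,s_1}·[j ; r_1+r_2], where λ^j_{a,b} = (−1)^{b−1}·C(a+b−j−1, a−j)·B_{a+b−j}/(a+b−j)!. -/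
open Finset

private lemma neg_one_pow_congr' {K : Type*} [Monoid K] [HasDistribNeg K]
    {m n : ℕ} (h : m % 2 = n % 2) : (-1 : K) ^ m = (-1 : K) ^ n := by
  rw [← Nat.div_add_mod m 2, ← Nat.div_add_mod n 2, pow_add, pow_add,
    pow_mul, pow_mul, neg_one_sq, one_pow, one_pow, h]

/-- Alternating binomial convolution. -/
private lemma alt_choose_sum : ∀ (n c k : ℕ),
    ∑ m ∈ range (n + 1), (-1 : ℤ) ^ m * (n.choose m) * ((c + m).choose k) =
      if n ≤ k then (-1 : ℤ) ^ n * (c.choose (k - n)) else 0 := by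
  intro n
  induction n with
  | zero => intro c k; simp
  | succ n ih =>
    intro c k
    have peel : ∀ c' : ℕ,
        ∑ m ∈ range (n + 1), (-1 : ℤ) ^ m * (n.choose m) * ((c' + m).choose k)
          = (c'.choose k : ℤ)
            - ∑ m ∈ range n, (-1 : ℤ) ^ m * (n.choose (m+1)) * ((c' + 1 + m).choose k) := by
      intro c'
      rw [Finset.sum_range_succ' (fun m => (-1 : ℤ) ^ m * (n.choose m) * ((c' + m).choose k))]
      simp only [pow_succ, Nat.choose_zero_right, Nat.cast_one, pow_zero, one_mul, add_zero]
      rw [add_comm, sub_eq_add_neg, ← Finset.sum_neg_distrib]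
      congr 1
      apply Finset.sum_congr rfl
      intro m _
      have h1 : c' + (m + 1) = c' + 1 + m := by omega
      rw [h1]; ring
    have hB : ∑ m ∈ range (n+1), (-1 : ℤ) ^ m * (n.choose (m+1)) * ((c + 1 + m).choose k)
        = ∑ m ∈ range n, (-1 : ℤ) ^ m * (n.choose (m+1)) * ((c + 1 + m).choose k) := by
      rw [Finset.sum_range_succ]
      simp [Nat.choose_succ_self]
    have hsplit : ∑ m ∈ range (n + 2), (-1 : ℤ) ^ m * ((n+1).choose m) * ((c + m).choose k)
        = (∑ m ∈ range (n + 1), (-1 : ℤ) ^ m * (n.choose m) * ((c + m).choose k))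
          - ∑ m ∈ range (n + 1), (-1 : ℤ) ^ m * (n.choose m) * ((c + 1 + m).choose k) := by
      rw [Finset.sum_range_succ'
        (fun m => (-1 : ℤ) ^ m * ((n+1).choose m) * ((c + m).choose k))]
      simp only [pow_succ, Nat.choose_zero_right, Nat.cast_one, pow_zero, one_mul, add_zero]
      have expand : ∑ m ∈ range (n + 1),
            (-1:ℤ)^m * (-1) * ((n+1).choose (m+1)) * ((c + (m+1)).choose k)
          = -(∑ m ∈ range (n+1), (-1:ℤ)^m * (n.choose m) * ((c + 1 + m).choose k))
            - ∑ m ∈ range (n+1), (-1:ℤ)^m * (n.choose (m+1)) * ((c + 1 + m).choose k) := by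
        rw [sub_eq_add_neg, ← Finset.sum_neg_distrib, ← Finset.sum_neg_distrib,
          ← Finset.sum_add_distrib]
        apply Finset.sum_congr rfl
        intro m _
        have h1 : c + (m + 1) = c + 1 + m := by omega
        rw [h1]
        push_cast [Nat.choose_succ_succ]
        ring
      rw [expand, hB, peel c]
      ring
    rw [hsplit, ih c k, ih (c+1) k]
    by_cases h1 : n + 1 ≤ k
    · have h2 : n ≤ k := by omega
      have hkn : k - n = (k - (n+1)) + 1 := by omega
      have hc : ((c+1).choose (k-n) : ℤ) = c.choose (k - (n+1)) + c.choose (k-n) := by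
        rw [hkn]
        exact_mod_cast congrArg (Nat.cast (R := ℤ)) (Nat.choose_succ_succ c (k - (n+1)))
      simp only [if_pos h1, if_pos h2, hc]
      ring
    · by_cases h2 : n ≤ k
      · have h3 : n = k := by omega
        subst h3
        simp [h1]
      · simp [h1, h2]

/-- `∑_{m=0}^{b} (-1)^m C(b,m)/(a+m) = (a-1)! b! / (a+b)!` for `a ≥ 1`. -/
private lemma sum_inv_binom : ∀ (b : ℕ), ∀ a : ℕ, 1 ≤ a →
    ∑ m ∈ range (b+1), (-1:ℚ)^m * (b.choose m) / ((a:ℚ)+(m:ℚ)) =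
      ((a-1).factorial : ℚ) * (b.factorial : ℚ) / ((a+b).factorial : ℚ) := by
  intro b
  induction b with
  | zero =>
    intro a ha
    have h : (a.factorial : ℚ) = (a:ℚ) * ((a-1).factorial : ℚ) := by
      exact_mod_cast (Nat.mul_factorial_pred (by omega)).symm
    have ha' : (a:ℚ) ≠ 0 := by positivity
    have hf : ((a-1).factorial : ℚ) ≠ 0 := by
      exact_mod_cast (a-1).factorial_ne_zero
    simp only [range_one, sum_singleton, pow_zero, Nat.choose_zero_right, Nat.cast_one,
      one_mul, Nat.cast_zero, add_zero, Nat.factorial_zero, mul_one, h]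
    rw [div_mul_eq_div_div_swap, div_self hf]
    simp
  | succ b ih =>
    intro a ha
    have peel : ∀ a' : ℕ, 1 ≤ a' →
        ∑ m ∈ range (b+1), (-1:ℚ)^m * (b.choose m) / ((a':ℚ)+(m:ℚ))
          = 1/(a':ℚ) - ∑ m ∈ range b, (-1:ℚ)^m * (b.choose (m+1)) / ((a':ℚ)+1+(m:ℚ)) := by
      intro a' _
      rw [Finset.sum_range_succ' (fun m => (-1:ℚ)^m * (b.choose m) / ((a':ℚ)+(m:ℚ)))]
      simp only [pow_succ, Nat.choose_zero_right, Nat.cast_one, pow_zero, one_mul,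
        Nat.cast_zero, add_zero]
      rw [add_comm, sub_eq_add_neg, ← Finset.sum_neg_distrib]
      rw [one_div]
      congr 1
      apply Finset.sum_congr rfl
      intro m _
      push_cast
      ring
    have hB : ∑ m ∈ range (b+1), (-1:ℚ)^m * (b.choose (m+1)) / ((a:ℚ)+1+(m:ℚ))
        = ∑ m ∈ range b, (-1:ℚ)^m * (b.choose (m+1)) / ((a:ℚ)+1+(m:ℚ)) := by
      rw [Finset.sum_range_succ]
      simp [Nat.choose_succ_self]
    have key : ∑ m ∈ range (b+2), (-1:ℚ)^m * ((b+1).choose m) / ((a:ℚ)+(m:ℚ))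
        = (∑ m ∈ range (b+1), (-1:ℚ)^m * (b.choose m) / ((a:ℚ)+(m:ℚ)))
          - ∑ m ∈ range (b+1), (-1:ℚ)^m * (b.choose m) / ((a:ℚ)+1+(m:ℚ)) := by
      rw [Finset.sum_range_succ'
        (fun m => (-1:ℚ)^m * ((b+1).choose m) / ((a:ℚ)+(m:ℚ)))]
      simp only [pow_succ, Nat.choose_zero_right, Nat.cast_one, pow_zero, one_mul,
        Nat.cast_zero, add_zero]
      have expand : ∑ m ∈ range (b+1),
            (-1:ℚ)^m * (-1) * ((b+1).choose (m+1)) / ((a:ℚ)+((m+1:ℕ):ℚ))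
          = -(∑ m ∈ range (b+1), (-1:ℚ)^m * (b.choose m) / ((a:ℚ)+1+(m:ℚ)))
            - ∑ m ∈ range (b+1), (-1:ℚ)^m * (b.choose (m+1)) / ((a:ℚ)+1+(m:ℚ)) := by
        rw [sub_eq_add_neg, ← Finset.sum_neg_distrib, ← Finset.sum_neg_distrib,
          ← Finset.sum_add_distrib]
        apply Finset.sum_congr rfl
        intro m _
        rw [Nat.choose_succ_succ b m]
        push_cast
        ring
      rw [expand, hB, peel a ha]
      ring
    have ih2 : ∑ m ∈ range (b+1), (-1:ℚ)^m * (b.choose m) / ((a:ℚ)+1+(m:ℚ))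
        = (a.factorial:ℚ) * (b.factorial:ℚ) / (((a+b+1).factorial:ℚ)) := by
      have h := ih (a+1) (Nat.le_add_left 1 a)
      simp only [Nat.add_sub_cancel] at h
      have e : a+1+b = a+b+1 := by omega
      rw [e] at h
      push_cast at h
      convert h using 2
    have e2 : a+(b+1) = a+b+1 := by omega
    rw [key, ih a ha, ih2, e2]
    have f1 : ((a+b+1).factorial:ℚ) = ((a+b+1:ℕ):ℚ) * ((a+b).factorial:ℚ) := by
      push_cast [Nat.factorial_succ]
      ring
    have f2 : ((b+1).factorial:ℚ) = ((b+1:ℕ):ℚ) * (b.factorial:ℚ) := by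
      push_cast [Nat.factorial_succ]
      ring
    have f3 : (a.factorial:ℚ) = (a:ℚ) * ((a-1).factorial:ℚ) := by
      exact_mod_cast (Nat.mul_factorial_pred (by omega)).symm
    have hne1 : ((a+b).factorial:ℚ) ≠ 0 := by exact_mod_cast (a+b).factorial_ne_zero
    have hne2 : ((a+b+1:ℕ):ℚ) ≠ 0 := by positivity
    rw [f1, f2, f3]
    field_simp
    push_cast
    ring

/-- The kernel appearing after Faulhaber expansion. -/
private noncomputable def Kq (a b i : ℕ) : ℚ :=
  ∑ m ∈ range b, if i < a + m then
    (-1:ℚ)^m * (((b-1).choose m : ℕ) : ℚ) * (((a+m).choose i : ℕ) : ℚ) / ((a:ℚ)+(m:ℚ))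
  else 0

private lemma Kq_zero {a b : ℕ} (ha : 1 ≤ a) (hb : 1 ≤ b) :
    Kq a b 0 = ((a-1).factorial : ℚ) * ((b-1).factorial : ℚ) / (((a+b-1).factorial : ℚ)) := by
  have e : a + (b-1) = a+b-1 := by omega
  have eb : b - 1 + 1 = b := by omega
  rw [Kq]
  rw [show (∑ m ∈ range b, if (0:ℕ) < a + m then
      (-1:ℚ)^m * (((b-1).choose m : ℕ) : ℚ) * (((a+m).choose 0 : ℕ) : ℚ) / ((a:ℚ)+(m:ℚ))
    else 0) = ∑ m ∈ range b, (-1:ℚ)^m * (((b-1).choose m : ℕ) : ℚ) / ((a:ℚ)+(m:ℚ)) from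
    Finset.sum_congr rfl (by
      intro m _
      rw [if_pos (by omega)]
      simp)]
  rw [show range b = range ((b-1)+1) from by rw [eb]]
  rw [sum_inv_binom (b-1) a ha, e]

private lemma Kq_pos {a b i : ℕ} (ha : 1 ≤ a) (hb : 1 ≤ b) (hi : 1 ≤ i) (hi' : i ≤ a+b-1) :
    Kq a b i = ((i:ℚ))⁻¹ *
      ((if b ≤ i then (-1:ℚ)^(b-1) * (((a-1).choose (i-b) : ℕ) : ℚ) else 0)
        - (if a ≤ i then (-1:ℚ)^(i-a) * (((b-1).choose (i-a) : ℕ) : ℚ) else 0)) := by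
  have hiq : (i:ℚ) ≠ 0 := by positivity
  have termeq : ∀ m ∈ range b,
      (if i < a + m then
        (-1:ℚ)^m * (((b-1).choose m : ℕ) : ℚ) * (((a+m).choose i : ℕ) : ℚ) / ((a:ℚ)+(m:ℚ))
      else 0)
      = (i:ℚ)⁻¹ * ((-1:ℚ)^m * (((b-1).choose m : ℕ) : ℚ) * ((((a-1)+m).choose (i-1) : ℕ) : ℚ))
        - (if i = a + m then (i:ℚ)⁻¹ * ((-1:ℚ)^m * (((b-1).choose m : ℕ) : ℚ)) else 0) := by
    intro m _
    rcases lt_trichotomy i (a+m) with hlt | heq | hgt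
    · rw [if_pos hlt, if_neg (by omega)]
      have hn : (a+m) * (((a-1)+m).choose (i-1)) = (a+m).choose i * i := by
        have h := Nat.add_one_mul_choose_eq ((a-1)+m) (i-1)
        have e1 : (a-1)+m+1 = a+m := by omega
        have e2 : (i-1)+1 = i := by omega
        simp only [Nat.succ_eq_add_one, e1, e2] at h
        exact h
      have hq : ((a:ℚ)+(m:ℚ)) * ((((a-1)+m).choose (i-1) : ℕ) : ℚ)
          = (((a+m).choose i : ℕ) : ℚ) * (i:ℚ) := by exact_mod_cast hn
      have hne : (a:ℚ)+(m:ℚ) ≠ 0 := by positivity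
      field_simp
      linear_combination (-1:ℚ) * ((-1:ℚ)^m * (((b-1).choose m : ℕ) : ℚ)) * hq
    · rw [if_neg (by omega), if_pos heq]
      have e3 : i - 1 = (a-1)+m := by omega
      rw [e3, Nat.choose_self]
      simp
    · rw [if_neg (by omega), if_neg (by omega)]
      rw [Nat.choose_eq_zero_of_lt (by omega : (a-1)+m < i-1)]
      simp
  rw [Kq, Finset.sum_congr rfl termeq, Finset.sum_sub_distrib, ← Finset.mul_sum]
  have eb : b - 1 + 1 = b := by omega
  have first : ∑ m ∈ range b,
      ((-1:ℚ)^m * (((b-1).choose m : ℕ) : ℚ) * ((((a-1)+m).choose (i-1) : ℕ) : ℚ))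
      = if b ≤ i then (-1:ℚ)^(b-1) * (((a-1).choose (i-b) : ℕ) : ℚ) else 0 := by
    have h := alt_choose_sum (b-1) (a-1) (i-1)
    have hcast := congrArg (fun z : ℤ => (z : ℚ)) h
    push_cast at hcast
    rw [eb] at hcast
    rw [hcast]
    by_cases hbi : b ≤ i
    · rw [if_pos (by omega : b-1 ≤ i-1), if_pos hbi, (by omega : i-1-(b-1) = i-b)]
    · rw [if_neg (by omega), if_neg hbi]
  have second : ∑ m ∈ range b,
      (if i = a + m then (i:ℚ)⁻¹ * ((-1:ℚ)^m * (((b-1).choose m : ℕ) : ℚ)) else 0)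
      = if a ≤ i then (i:ℚ)⁻¹ * ((-1:ℚ)^(i-a) * (((b-1).choose (i-a) : ℕ) : ℚ)) else 0 := by
    by_cases hai : a ≤ i
    · rw [if_pos hai]
      rw [Finset.sum_eq_single (i-a)]
      · rw [if_pos (by omega)]
      · intro m _ hne
        rw [if_neg (by omega)]
      · intro habs
        exact absurd (Finset.mem_range.mpr (by omega)) habs
    · rw [if_neg hai]
      apply Finset.sum_eq_zero
      intro m _
      rw [if_neg (by omega)]
  rw [first, second]
  by_cases hai : a ≤ i <;> by_cases hbi : b ≤ i <;>
    simp only [if_pos, if_neg, hai, hbi, if_true, if_false] <;> ring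


private lemma lam_coeff {a b i : ℕ} (ha : 1 ≤ a) (hb : 1 ≤ b) (hbi : b ≤ i) (hi' : i ≤ a+b-1) :
    lam a b (a+b-i) * ((a-1).factorial:ℚ) * ((b-1).factorial:ℚ) / (((a+b-1-i).factorial:ℚ))
      = bernoulli i * (-1:ℚ)^(b-1) * (((a-1).choose (i-b) : ℕ) : ℚ) / (i:ℚ) := by
  have hi : 1 ≤ i := le_trans hb hbi
  rw [lam, show a+b-(a+b-i) = i by omega, show a-(a+b-i) = i-b by omega]
  have h1 : (i-1).choose (i-b) * (i-b).factorial * (b-1).factorial = (i-1).factorial := by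
    have := Nat.choose_mul_factorial_mul_factorial (show i-b ≤ i-1 by omega)
    rwa [show i-1-(i-b) = b-1 by omega] at this
  have h2 : (a-1).choose (i-b) * (i-b).factorial * (a+b-1-i).factorial = (a-1).factorial := by
    have := Nat.choose_mul_factorial_mul_factorial (show i-b ≤ a-1 by omega)
    rwa [show a-1-(i-b) = a+b-1-i by omega] at this
  have h3 : (i.factorial : ℚ) = (i:ℚ) * ((i-1).factorial : ℚ) := by
    exact_mod_cast (Nat.mul_factorial_pred (by omega)).symm
  have c1 : (((i-1).choose (i-b) : ℕ) : ℚ)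
      = ((i-1).factorial : ℚ) / (((i-b).factorial : ℚ) * ((b-1).factorial : ℚ)) := by
    rw [eq_div_iff (by positivity)]
    push_cast
    rw [← mul_assoc]
    exact_mod_cast h1
  have c2 : (((a-1).choose (i-b) : ℕ) : ℚ)
      = ((a-1).factorial : ℚ) / (((i-b).factorial : ℚ) * ((a+b-1-i).factorial : ℚ)) := by
    rw [eq_div_iff (by positivity)]
    push_cast
    rw [← mul_assoc]
    exact_mod_cast h2
  rw [c1, c2, h3]
  have n1 : ((i-1).factorial : ℚ) ≠ 0 := by exact_mod_cast (i-1).factorial_ne_zero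
  have n2 : ((i-b).factorial : ℚ) ≠ 0 := by exact_mod_cast (i-b).factorial_ne_zero
  have n3 : ((b-1).factorial : ℚ) ≠ 0 := by exact_mod_cast (b-1).factorial_ne_zero
  have n4 : ((a+b-1-i).factorial : ℚ) ≠ 0 := by exact_mod_cast (a+b-1-i).factorial_ne_zero
  have n5 : (i:ℚ) ≠ 0 := by positivity
  field_simp

/-- The per-index identity behind the stuffle formula. -/
private lemma peri {a b : ℕ} (ha : 1 ≤ a) (hb : 1 ≤ b) {i : ℕ} (hi : i < a + b) :
    bernoulli i * Kq a b i - (if a = 1 ∧ i = 1 then (1:ℚ) else 0)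
      = ((a-1).factorial:ℚ) * ((b-1).factorial:ℚ) *
          ((if i = 0 then (((a+b-1).factorial:ℚ))⁻¹ else 0)
            + (if b ≤ i then lam a b (a+b-i) / ((a+b-1-i).factorial:ℚ) else 0)
            + (if a ≤ i then lam b a (a+b-i) / ((a+b-1-i).factorial:ℚ) else 0)) := by
  have F1 : ((a-1).factorial:ℚ) * ((b-1).factorial:ℚ) *
      (if b ≤ i then lam a b (a+b-i) / ((a+b-1-i).factorial:ℚ) else 0)
      = if b ≤ i then bernoulli i * (-1:ℚ)^(b-1) * (((a-1).choose (i-b) : ℕ) : ℚ) / (i:ℚ)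
        else 0 := by
    by_cases hbi : b ≤ i
    · rw [if_pos hbi, if_pos hbi, ← lam_coeff ha hb hbi (by omega)]
      ring
    · simp [hbi]
  have F2 : ((a-1).factorial:ℚ) * ((b-1).factorial:ℚ) *
      (if a ≤ i then lam b a (a+b-i) / ((a+b-1-i).factorial:ℚ) else 0)
      = if a ≤ i then bernoulli i * (-1:ℚ)^(a-1) * (((b-1).choose (i-a) : ℕ) : ℚ) / (i:ℚ)
        else 0 := by
    by_cases hai : a ≤ i
    · have h := lam_coeff hb ha hai (by omega : i ≤ b+a-1)
      simp only [show b+a = a+b from Nat.add_comm b a] at h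
      rw [if_pos hai, if_pos hai, ← h]
      ring
    · simp [hai]
  rw [mul_add, mul_add, F1, F2]
  rcases Nat.eq_zero_or_pos i with hi0 | hipos
  · subst hi0
    norm_num [Kq_zero ha hb, show ¬ b ≤ 0 by omega, show ¬ a ≤ 0 by omega]
    ring
  · rw [Kq_pos ha hb hipos (by omega)]
    rw [if_neg (by omega : ¬ i = 0)]
    -- goal: B_i * (i⁻¹ * (X - Y)) - δ = 0 + F1' + F2'
    rcases Nat.lt_or_ge i 2 with hi1 | hi2
    · -- i = 1
      have hieq : i = 1 := by omega
      subst hieq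
      rw [bernoulli_one]
      by_cases hai : a ≤ 1
      · have ha1 : a = 1 := by omega
        subst ha1
        by_cases hbi : b ≤ 1
        · have hb1 : b = 1 := by omega
          subst hb1
          norm_num
        · rw [if_neg hbi, if_neg hbi, if_pos le_rfl, if_pos le_rfl]
          norm_num
      · have δ0 : ¬ (a = 1 ∧ (1:ℕ) = 1) := by omega
        rw [if_neg δ0, if_neg (by omega : ¬ a ≤ 1), if_neg (by omega : ¬ a ≤ 1)]
        by_cases hbi : b ≤ 1
        · have hb1 : b = 1 := by omega
          subst hb1
          rw [if_pos le_rfl, if_pos le_rfl]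
          norm_num
        · rw [if_neg hbi, if_neg hbi]
          norm_num
    · -- i ≥ 2
      have δ0 : ¬ (a = 1 ∧ i = 1) := by omega
      rw [if_neg δ0]
      rcases Nat.even_or_odd i with hev | hodd
      · -- i even: (-1)^(i-a) = -(-1)^(a-1)
        have hm : i % 2 = 0 := Nat.even_iff.mp hev
        by_cases hai : a ≤ i
        · rw [if_pos hai, if_pos hai]
          have s1 : (-1:ℚ)^(i-a) = (-1:ℚ)^a := neg_one_pow_congr' (by omega)
          have s2 : (-1:ℚ)^(a-1) = (-1:ℚ)^(a+1) := neg_one_pow_congr' (by omega)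
          rw [s1, s2, pow_succ]
          by_cases hbi : b ≤ i
          · rw [if_pos hbi, if_pos hbi]; ring
          · rw [if_neg hbi, if_neg hbi]; ring
        · rw [if_neg hai, if_neg hai]
          by_cases hbi : b ≤ i
          · rw [if_pos hbi, if_pos hbi]; ring
          · rw [if_neg hbi, if_neg hbi]; ring
      · -- i odd, ≥ 3 : B_i = 0
        have hbz : bernoulli i = 0 := by
          rw [bernoulli_eq_bernoulli'_of_ne_one (by omega : i ≠ 1)]
          exact bernoulli'_eq_zero_of_odd hodd (by omega)
        rw [hbz]
        simp

open Finset in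
/-- Key scalar identity: the convolution `∑_{v₁+v₂=w} v₁^{a-1} v₂^{b-1}` in terms of
powers of `w` with Bernoulli-number coefficients. -/
private lemma star {a b : ℕ} (ha : 1 ≤ a) (hb : 1 ≤ b) {w : ℕ} (hw : 1 ≤ w) :
    ∑ v ∈ Ioo 0 w, (v:ℚ)^(a-1) * (((w - v : ℕ) : ℚ))^(b-1) =
      ((a-1).factorial : ℚ) * ((b-1).factorial : ℚ) *
        ((w:ℚ)^(a+b-1) / ((a+b-1).factorial : ℚ)
          + ∑ j ∈ Icc 1 a, lam a b j * (w:ℚ)^(j-1) / ((j-1).factorial : ℚ)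
          + ∑ j ∈ Icc 1 b, lam b a j * (w:ℚ)^(j-1) / ((j-1).factorial : ℚ)) := by
  -- Step 1: complete the sum at `v = 0`
  have herase : (range w).erase 0 = Ioo 0 w := by
    ext x
    simp only [Finset.mem_erase, Finset.mem_range, Finset.mem_Ioo]
    omega
  have h1 : ∑ v ∈ Ioo 0 w, (v:ℚ)^(a-1) * (((w - v : ℕ) : ℚ))^(b-1)
      = (∑ v ∈ range w, (v:ℚ)^(a-1) * ((w:ℚ)-(v:ℚ))^(b-1))
        - (0:ℚ)^(a-1) * (w:ℚ)^(b-1) := by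
    rw [eq_sub_iff_add_eq, add_comm,
      show ((0:ℚ)^(a-1) * (w:ℚ)^(b-1)) =
        ((fun v : ℕ => (v:ℚ)^(a-1) * ((w:ℚ)-(v:ℚ))^(b-1)) 0) by simp,
      ← Finset.add_sum_erase _ _ (Finset.mem_range.mpr (by omega : 0 < w)), herase]
    congr 1
    apply Finset.sum_congr rfl
    intro v hv
    rw [Nat.cast_sub (le_of_lt (Finset.mem_Ioo.mp hv).2)]
  -- Step 2+3: binomial expansion and Faulhaber
  have hexp : ∑ v ∈ range w, (v:ℚ)^(a-1) * ((w:ℚ)-(v:ℚ))^(b-1)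
      = ∑ i ∈ range (a+b), bernoulli i * (w:ℚ)^(a+b-1-i) * Kq a b i := by
    have step2 : ∑ v ∈ range w, (v:ℚ)^(a-1) * ((w:ℚ)-(v:ℚ))^(b-1)
        = ∑ m ∈ range b, ∑ v ∈ range w,
            (-1:ℚ)^m * (((b-1).choose m : ℕ):ℚ) * (w:ℚ)^(b-1-m) * (v:ℚ)^(a-1+m) := by
      rw [Finset.sum_comm]
      apply Finset.sum_congr rfl
      intro v _
      have hbin : ((w:ℚ)-(v:ℚ))^(b-1) = ∑ m ∈ range b,
          (-1:ℚ)^m * (((b-1).choose m : ℕ):ℚ) * (w:ℚ)^(b-1-m) * (v:ℚ)^m := by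
        rw [sub_eq_neg_add, add_pow, show b-1+1 = b by omega]
        apply Finset.sum_congr rfl
        intro m _
        rw [neg_pow]
        ring
      rw [hbin, Finset.mul_sum]
      apply Finset.sum_congr rfl
      intro m _
      rw [pow_add]
      ring
    rw [step2]
    have step3 : ∀ m ∈ range b,
        ∑ v ∈ range w, (-1:ℚ)^m * (((b-1).choose m : ℕ):ℚ) * (w:ℚ)^(b-1-m) * (v:ℚ)^(a-1+m)
        = ∑ i ∈ range (a+b), (if i < a + m then
            bernoulli i * (w:ℚ)^(a+b-1-i) *
              ((-1:ℚ)^m * (((b-1).choose m : ℕ):ℚ) * (((a+m).choose i : ℕ):ℚ)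
                / ((a:ℚ)+(m:ℚ)))
          else 0) := by
      intro m hm
      have hmb : m < b := Finset.mem_range.mp hm
      rw [← Finset.mul_sum]
      have faul := _root_.sum_range_pow w (a-1+m)
      rw [show a-1+m+1 = a+m by omega] at faul
      have ecast : ((a-1+m : ℕ) : ℚ) + 1 = (a:ℚ) + (m:ℚ) := by
        push_cast [Nat.cast_sub ha]
        ring
      rw [ecast] at faul
      rw [faul, Finset.mul_sum]
      rw [← Finset.sum_subset (Finset.range_subset_range.mpr (by omega : a+m ≤ a+b))
        (fun i _ hni => by rw [if_neg (by simp at hni; omega)])]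
      apply Finset.sum_congr rfl
      intro i hi
      have hilt : i < a + m := Finset.mem_range.mp hi
      rw [if_pos hilt]
      have hpow : (w:ℚ)^(b-1-m) * (w:ℚ)^(a+m-i) = (w:ℚ)^(a+b-1-i) := by
        rw [← pow_add]
        congr 1
        have hmb : m < b := Finset.mem_range.mp hm
        omega
      push_cast
      rw [← hpow]
      ring
    rw [Finset.sum_congr rfl step3, Finset.sum_comm]
    apply Finset.sum_congr rfl
    intro i _
    rw [Kq, Finset.mul_sum]
    apply Finset.sum_congr rfl
    intro m _
    by_cases hc : i < a + m
    · rw [if_pos hc, if_pos hc]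
    · rw [if_neg hc, if_neg hc, mul_zero]
  -- Step 6: the `v = 0` term as a sum over `i`
  have h0 : (0:ℚ)^(a-1) * (w:ℚ)^(b-1)
      = ∑ i ∈ range (a+b), (if a = 1 ∧ i = 1 then (w:ℚ)^(a+b-1-i) else 0) := by
    by_cases ha1 : a = 1
    · subst ha1
      simp only [Nat.sub_self, pow_zero, one_mul, true_and]
      rw [Finset.sum_ite_eq' (range (1+b)) 1 (fun i => (w:ℚ)^(1+b-1-i))]
      rw [if_pos (Finset.mem_range.mpr (by omega))]
      congr 1
      omega
    · rw [zero_pow (by omega : a-1 ≠ 0)]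
      rw [Finset.sum_eq_zero (fun i _ => by rw [if_neg (by tauto)])]
      ring
  -- Step 7: reindex the λ-sums
  have hJ1 : ∑ j ∈ Icc 1 a, lam a b j * (w:ℚ)^(j-1) / ((j-1).factorial : ℚ)
      = ∑ i ∈ range (a+b), (if b ≤ i then
          lam a b (a+b-i) * (w:ℚ)^(a+b-1-i) / ((a+b-1-i).factorial : ℚ) else 0) := by
    rw [← Finset.sum_filter]
    apply Finset.sum_nbij' (fun j => a+b-j) (fun i => a+b-i)
    · intro j hj
      simp only [Finset.mem_Icc] at hj
      simp only [Finset.mem_filter, Finset.mem_range]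
      omega
    · intro i hi
      simp only [Finset.mem_filter, Finset.mem_range] at hi
      simp only [Finset.mem_Icc]
      omega
    · intro j hj
      simp only [Finset.mem_Icc] at hj
      omega
    · intro i hi
      simp only [Finset.mem_filter, Finset.mem_range] at hi
      omega
    · intro j hj
      simp only [Finset.mem_Icc] at hj
      rw [show a+b-(a+b-j) = j by omega, show a+b-1-(a+b-j) = j-1 by omega]
  have hJ2 : ∑ j ∈ Icc 1 b, lam b a j * (w:ℚ)^(j-1) / ((j-1).factorial : ℚ)
      = ∑ i ∈ range (a+b), (if a ≤ i then
          lam b a (a+b-i) * (w:ℚ)^(a+b-1-i) / ((a+b-1-i).factorial : ℚ) else 0) := by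
    rw [← Finset.sum_filter]
    apply Finset.sum_nbij' (fun j => a+b-j) (fun i => a+b-i)
    · intro j hj
      simp only [Finset.mem_Icc] at hj
      simp only [Finset.mem_filter, Finset.mem_range]
      omega
    · intro i hi
      simp only [Finset.mem_filter, Finset.mem_range] at hi
      simp only [Finset.mem_Icc]
      omega
    · intro j hj
      simp only [Finset.mem_Icc] at hj
      omega
    · intro i hi
      simp only [Finset.mem_filter, Finset.mem_range] at hi
      omega
    · intro j hj
      simp only [Finset.mem_Icc] at hj
      rw [show a+b-(a+b-j) = j by omega, show a+b-1-(a+b-j) = j-1 by omega]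
  have hJ0 : (w:ℚ)^(a+b-1) / ((a+b-1).factorial : ℚ)
      = ∑ i ∈ range (a+b), (if i = 0 then
          (w:ℚ)^(a+b-1-i) / ((a+b-1-i).factorial : ℚ) else 0) := by
    rw [Finset.sum_ite_eq' (range (a+b)) 0
      (fun i => (w:ℚ)^(a+b-1-i) / ((a+b-1-i).factorial : ℚ))]
    rw [if_pos (Finset.mem_range.mpr (by omega))]
    norm_num
  rw [h1, hexp, h0, hJ0, hJ1, hJ2, ← Finset.sum_sub_distrib,
    ← Finset.sum_add_distrib, ← Finset.sum_add_distrib, Finset.mul_sum]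
  apply Finset.sum_congr rfl
  intro i hi
  have hperi := peri ha hb (Finset.mem_range.mp hi)
  split_ifs at hperi ⊢ <;>
    first
      | (exfalso; omega)
      | linear_combination (w:ℚ)^(a+b-1-i) * hperi
      | (subst_vars; simp only [Nat.sub_zero] at hperi ⊢;
          linear_combination (w:ℚ)^(a+b-1) * hperi)

private lemma coeff_biBracket_one (s r N : ℕ) :
    (PowerSeries.coeff N) (biBracket ![s] ![r]) =
      ((r.factorial : ℚ) * ((s-1).factorial : ℚ))⁻¹ *
        ∑ p ∈ N.divisorsAntidiagonal, (p.1:ℚ)^r * (p.2:ℚ)^(s-1) := by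
  rw [biBracket, PowerSeries.coeff_mk]
  congr 1
  · rw [Fin.prod_univ_one]
    simp
  · have hinj : Set.InjOn (fun p : ℕ × ℕ => ((fun _ => p.1, fun _ => p.2) :
        (Fin 1 → ℕ) × (Fin 1 → ℕ))) (N.divisorsAntidiagonal : Set (ℕ × ℕ)) := by
      intro p _ q _ h
      exact Prod.ext (congrFun (congrArg Prod.fst h) 0) (congrFun (congrArg Prod.snd h) 0)
    have himg : {uv : (Fin 1 → ℕ) × (Fin 1 → ℕ) |
        StrictAnti uv.1 ∧ (∀ i, 0 < uv.1 i) ∧ (∀ i, 0 < uv.2 i) ∧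
          ∑ i, uv.1 i * uv.2 i = N}
        = (fun p : ℕ × ℕ => ((fun _ => p.1, fun _ => p.2) :
            (Fin 1 → ℕ) × (Fin 1 → ℕ))) '' (N.divisorsAntidiagonal : Set (ℕ × ℕ)) := by
      ext uv
      simp only [Set.mem_setOf_eq, Set.mem_image, Finset.mem_coe,
        Nat.mem_divisorsAntidiagonal]
      constructor
      · rintro ⟨-, hu, hv, hsum⟩
        rw [Fin.sum_univ_one] at hsum
        refine ⟨(uv.1 0, uv.2 0), ⟨hsum, ?_⟩, ?_⟩
        · rw [← hsum]
          exact (Nat.mul_pos (hu 0) (hv 0)).ne'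
        · refine Prod.ext (funext fun i => ?_) (funext fun i => ?_) <;>
            rw [Subsingleton.elim i 0]
      · rintro ⟨⟨p1, p2⟩, ⟨hmul, hN0⟩, rfl⟩
        refine ⟨fun i j h => absurd (Subsingleton.elim i j) h.ne, fun i => ?_, fun i => ?_, ?_⟩
        · exact Nat.pos_of_ne_zero (by rintro rfl; simp at hmul; omega)
        · exact Nat.pos_of_ne_zero (by rintro rfl; simp at hmul; omega)
        · rw [Fin.sum_univ_one]
          exact hmul
    rw [himg, finsum_mem_image hinj, finsum_mem_coe_finset]
    apply Finset.sum_congr rfl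
    intro p _
    rw [Fin.prod_univ_one]
    simp

private noncomputable def QF (N : ℕ) : Finset ((ℕ × ℕ) × (ℕ × ℕ)) :=
  (Finset.HasAntidiagonal.antidiagonal N).biUnion fun nn =>
    nn.1.divisorsAntidiagonal ×ˢ nn.2.divisorsAntidiagonal

private lemma mem_QF {N : ℕ} {pq : (ℕ × ℕ) × (ℕ × ℕ)} :
    pq ∈ QF N ↔ pq.1.1 * pq.1.2 + pq.2.1 * pq.2.2 = N ∧
      pq.1.1 * pq.1.2 ≠ 0 ∧ pq.2.1 * pq.2.2 ≠ 0 := by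
  unfold QF
  simp only [Finset.mem_biUnion, Finset.HasAntidiagonal.mem_antidiagonal, Finset.mem_product,
    Nat.mem_divisorsAntidiagonal, Prod.exists]
  constructor
  · rintro ⟨n1, n2, hsum, ⟨h1, h1n⟩, ⟨h2, h2n⟩⟩
    rw [← h1, ← h2] at hsum
    exact ⟨hsum, h1 ▸ h1n, h2 ▸ h2n⟩
  · rintro ⟨hsum, h1, h2⟩
    exact ⟨_, _, hsum, ⟨rfl, h1⟩, ⟨rfl, h2⟩⟩

private lemma strictAnti_pair {x y : ℕ} : StrictAnti ![x, y] ↔ y < x := by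
  constructor
  · intro h
    have := h (show (0:Fin 2) < 1 by decide)
    simpa using this
  · intro h i j hij
    fin_cases i <;> fin_cases j <;>
      first
        | exact absurd hij (by decide)
        | simpa using h

private lemma coeff_biBracket_two (s1 s2 r1 r2 N : ℕ) :
    (PowerSeries.coeff N) (biBracket ![s1, s2] ![r1, r2]) =
      ((r1.factorial:ℚ) * ((s1-1).factorial:ℚ) *
          ((r2.factorial:ℚ) * ((s2-1).factorial:ℚ)))⁻¹ *
        ∑ pq ∈ (QF N).filter (fun pq => pq.2.1 < pq.1.1),
          (pq.1.1:ℚ)^r1 * (pq.1.2:ℚ)^(s1-1) * (pq.2.1:ℚ)^r2 * (pq.2.2:ℚ)^(s2-1) := by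
  rw [biBracket, PowerSeries.coeff_mk]
  congr 1
  · rw [Fin.prod_univ_two]
    simp
  · have hinj : Set.InjOn
        (fun pq : (ℕ×ℕ)×(ℕ×ℕ) => ((![pq.1.1, pq.2.1], ![pq.1.2, pq.2.2]) :
          (Fin 2 → ℕ) × (Fin 2 → ℕ)))
        (((QF N).filter (fun pq => pq.2.1 < pq.1.1)) : Set ((ℕ×ℕ)×(ℕ×ℕ))) := by
      intro p _ q _ h
      have e11 := congrFun (congrArg Prod.fst h) 0
      have e12 := congrFun (congrArg Prod.fst h) 1
      have e21 := congrFun (congrArg Prod.snd h) 0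
      have e22 := congrFun (congrArg Prod.snd h) 1
      simp only [Matrix.cons_val_zero, Matrix.cons_val_one, Matrix.head_cons] at e11 e12 e21 e22
      exact Prod.ext (Prod.ext e11 e21) (Prod.ext e12 e22)
    have himg : {uv : (Fin 2 → ℕ) × (Fin 2 → ℕ) |
        StrictAnti uv.1 ∧ (∀ i, 0 < uv.1 i) ∧ (∀ i, 0 < uv.2 i) ∧
          ∑ i, uv.1 i * uv.2 i = N}
        = (fun pq : (ℕ×ℕ)×(ℕ×ℕ) => ((![pq.1.1, pq.2.1], ![pq.1.2, pq.2.2]) :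
            (Fin 2 → ℕ) × (Fin 2 → ℕ))) ''
          (((QF N).filter (fun pq => pq.2.1 < pq.1.1)) : Set ((ℕ×ℕ)×(ℕ×ℕ))) := by
      ext uv
      simp only [Set.mem_setOf_eq, Set.mem_image, Finset.mem_coe, Finset.mem_filter, mem_QF]
      constructor
      · rintro ⟨hanti, hu, hv, hsum⟩
        rw [Fin.sum_univ_two] at hsum
        refine ⟨((uv.1 0, uv.2 0), (uv.1 1, uv.2 1)), ⟨⟨hsum, ?_, ?_⟩, ?_⟩, ?_⟩
        · exact (Nat.mul_pos (hu 0) (hv 0)).ne'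
        · exact (Nat.mul_pos (hu 1) (hv 1)).ne'
        · exact hanti (show (0:Fin 2) < 1 by decide)
        · refine Prod.ext (funext fun i => ?_) (funext fun i => ?_) <;>
            fin_cases i <;> simp
      · rintro ⟨pq, ⟨⟨hsum, h1, h2⟩, hlt⟩, heq⟩
        rw [← heq]
        have p11 : 0 < pq.1.1 := Nat.pos_of_ne_zero (fun h => h1 (by rw [h, zero_mul]))
        have p12 : 0 < pq.1.2 := Nat.pos_of_ne_zero (fun h => h1 (by rw [h, mul_zero]))
        have p21 : 0 < pq.2.1 := Nat.pos_of_ne_zero (fun h => h2 (by rw [h, zero_mul]))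
        have p22 : 0 < pq.2.2 := Nat.pos_of_ne_zero (fun h => h2 (by rw [h, mul_zero]))
        refine ⟨strictAnti_pair.mpr (by simpa using hlt), fun i => ?_, fun i => ?_, ?_⟩
        · fin_cases i
          · simpa using p11
          · simpa using p21
        · fin_cases i
          · simpa using p12
          · simpa using p22
        · rw [Fin.sum_univ_two]
          simpa using hsum
    rw [himg, finsum_mem_image hinj, finsum_mem_coe_finset]
    apply Finset.sum_congr rfl
    intro pq _
    rw [Fin.prod_univ_two]
    simp only [Matrix.cons_val_zero, Matrix.cons_val_one, Matrix.head_cons]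
    ring

open Finset in
private lemma diag_sum (s1 s2 r1 r2 N : ℕ) (hs1 : 1 ≤ s1) (hs2 : 1 ≤ s2) :
    ∑ pq ∈ (QF N).filter (fun pq => pq.1.1 = pq.2.1),
        (pq.1.1:ℚ)^r1 * (pq.1.2:ℚ)^(s1-1) * (pq.2.1:ℚ)^r2 * (pq.2.2:ℚ)^(s2-1)
      = ((s1-1).factorial:ℚ) * ((s2-1).factorial:ℚ) *
          ((∑ p ∈ N.divisorsAntidiagonal, (p.1:ℚ)^(r1+r2) * (p.2:ℚ)^(s1+s2-1))
              / ((s1+s2-1).factorial:ℚ)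
            + ∑ j ∈ Icc 1 s1, lam s1 s2 j / ((j-1).factorial:ℚ) *
                ∑ p ∈ N.divisorsAntidiagonal, (p.1:ℚ)^(r1+r2) * (p.2:ℚ)^(j-1)
            + ∑ j ∈ Icc 1 s2, lam s2 s1 j / ((j-1).factorial:ℚ) *
                ∑ p ∈ N.divisorsAntidiagonal, (p.1:ℚ)^(r1+r2) * (p.2:ℚ)^(j-1)) := by
  have hsig : ∑ pq ∈ (QF N).filter (fun pq => pq.1.1 = pq.2.1),
      (pq.1.1:ℚ)^r1 * (pq.1.2:ℚ)^(s1-1) * (pq.2.1:ℚ)^r2 * (pq.2.2:ℚ)^(s2-1)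
      = ∑ p ∈ N.divisorsAntidiagonal, ∑ v ∈ Ioo 0 p.2,
          (p.1:ℚ)^r1 * (p.1:ℚ)^r2 * (v:ℚ)^(s1-1) * (((p.2 - v : ℕ):ℚ))^(s2-1) := by
    rw [Finset.sum_sigma' N.divisorsAntidiagonal (fun p => Ioo 0 p.2)
      (fun p v => (p.1:ℚ)^r1 * (p.1:ℚ)^r2 * (v:ℚ)^(s1-1) * (((p.2 - v : ℕ):ℚ))^(s2-1))]
    apply Finset.sum_nbij' (fun pq => (⟨(pq.1.1, pq.1.2 + pq.2.2), pq.1.2⟩ :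
        (_ : ℕ × ℕ) × ℕ)) (fun x => ((x.1.1, x.2), (x.1.1, x.1.2 - x.2)))
    · intro pq hpq
      rw [Finset.mem_filter, mem_QF] at hpq
      obtain ⟨⟨hsum, h1, h2⟩, heq⟩ := hpq
      have p12 : 0 < pq.1.2 := Nat.pos_of_ne_zero (fun h => h1 (by rw [h, mul_zero]))
      have p22 : 0 < pq.2.2 := Nat.pos_of_ne_zero (fun h => h2 (by rw [h, mul_zero]))
      rw [Finset.mem_sigma, Nat.mem_divisorsAntidiagonal, Finset.mem_Ioo]
      refine ⟨⟨?_, ?_⟩, p12, ?_⟩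
      · rw [mul_add, ← hsum, heq]
      · omega
      · show pq.1.2 < pq.1.2 + pq.2.2
        omega
    · intro x hx
      rw [Finset.mem_sigma, Nat.mem_divisorsAntidiagonal, Finset.mem_Ioo] at hx
      obtain ⟨⟨hmul, hN0⟩, hv0, hvw⟩ := hx
      have hu : 0 < x.1.1 := Nat.pos_of_ne_zero (fun h => hN0 (by rw [← hmul, h, zero_mul]))
      rw [Finset.mem_filter, mem_QF]
      refine ⟨⟨?_, ?_, ?_⟩, rfl⟩
      · rw [← mul_add, show x.2 + (x.1.2 - x.2) = x.1.2 by omega]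
        exact hmul
      · exact (Nat.mul_pos hu hv0).ne'
      · exact (Nat.mul_pos hu (by omega : 0 < x.1.2 - x.2)).ne'
    · intro pq hpq
      rw [Finset.mem_filter, mem_QF] at hpq
      obtain ⟨⟨hsum, h1, h2⟩, heq⟩ := hpq
      rw [show pq.1.2 + pq.2.2 - pq.1.2 = pq.2.2 by omega]
      exact Prod.ext rfl (Prod.ext heq rfl)
    · intro x hx
      rw [Finset.mem_sigma, Nat.mem_divisorsAntidiagonal, Finset.mem_Ioo] at hx
      obtain ⟨⟨hmul, hN0⟩, hv0, hvw⟩ := hx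
      refine Sigma.ext ?_ (heq_of_eq rfl)
      rw [show x.2 + (x.1.2 - x.2) = x.1.2 by omega]
    · intro pq hpq
      rw [Finset.mem_filter, mem_QF] at hpq
      obtain ⟨⟨hsum, h1, h2⟩, heq⟩ := hpq
      rw [show pq.1.2 + pq.2.2 - pq.1.2 = pq.2.2 by omega, ← heq]
      ring
  rw [hsig]
  have hstep : ∀ p ∈ N.divisorsAntidiagonal,
      ∑ v ∈ Ioo 0 p.2, (p.1:ℚ)^r1 * (p.1:ℚ)^r2 * (v:ℚ)^(s1-1) * (((p.2 - v : ℕ):ℚ))^(s2-1)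
      = ((s1-1).factorial:ℚ) * ((s2-1).factorial:ℚ) *
          ((p.1:ℚ)^(r1+r2) * (p.2:ℚ)^(s1+s2-1) / ((s1+s2-1).factorial:ℚ)
            + ∑ j ∈ Icc 1 s1, lam s1 s2 j / ((j-1).factorial:ℚ) *
                ((p.1:ℚ)^(r1+r2) * (p.2:ℚ)^(j-1))
            + ∑ j ∈ Icc 1 s2, lam s2 s1 j / ((j-1).factorial:ℚ) *
                ((p.1:ℚ)^(r1+r2) * (p.2:ℚ)^(j-1))) := by
    intro p hp
    rw [Nat.mem_divisorsAntidiagonal] at hp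
    have hw : 1 ≤ p.2 := Nat.pos_of_ne_zero (fun h => hp.2 (by rw [← hp.1, h, mul_zero]))
    have : ∑ v ∈ Ioo 0 p.2,
        (p.1:ℚ)^r1 * (p.1:ℚ)^r2 * (v:ℚ)^(s1-1) * (((p.2 - v : ℕ):ℚ))^(s2-1)
        = (p.1:ℚ)^(r1+r2) * ∑ v ∈ Ioo 0 p.2, (v:ℚ)^(s1-1) * (((p.2 - v : ℕ):ℚ))^(s2-1) := by
      rw [Finset.mul_sum]
      apply Finset.sum_congr rfl
      intro v _
      rw [pow_add]
      ring
    rw [this, star hs1 hs2 hw, mul_left_comm]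
    congr 1
    rw [mul_add, mul_add]
    congr 1
    · congr 1
      · ring
      · rw [Finset.mul_sum]
        exact Finset.sum_congr rfl fun j _ => by ring
    · rw [Finset.mul_sum]
      exact Finset.sum_congr rfl fun j _ => by ring
  rw [Finset.sum_congr rfl hstep]
  rw [← Finset.mul_sum]
  congr 1
  rw [Finset.sum_add_distrib, Finset.sum_add_distrib]
  congr 1
  · congr 1
    · rw [Finset.sum_div]
    · rw [Finset.sum_comm]
      apply Finset.sum_congr rfl
      intro j _
      rw [Finset.mul_sum]
  · rw [Finset.sum_comm]
    apply Finset.sum_congr rfl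
    intro j _
    rw [Finset.mul_sum]

open Finset in
/-- **Stuffle product for length-1 bi-brackets**: for `s_1, s_2 ≥ 1` and
`r_1, r_2 ≥ 0`,
`[s_1;r_1]·[s_2;r_2] = [s_1,s_2;r_1,r_2] + [s_2,s_1;r_2,r_1]
 + C(r_1+r_2,r_1)([s_1+s_2;r_1+r_2] + Σ_{j=1}^{s_1} λ^j_{s_1,s_2}[j;r_1+r_2]
 + Σ_{j=1}^{s_2} λ^j_{s_2,s_1}[j;r_1+r_2])` in `ℚ⟦q⟧`. -/
theorem biBracket_stuffle_length_one (s₁ s₂ r₁ r₂ : ℕ)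
    (hs₁ : 1 ≤ s₁) (hs₂ : 1 ≤ s₂) :
    biBracket ![s₁] ![r₁] * biBracket ![s₂] ![r₂] =
      biBracket ![s₁, s₂] ![r₁, r₂] + biBracket ![s₂, s₁] ![r₂, r₁] +
        (((r₁ + r₂).choose r₁ : ℚ)) • biBracket ![s₁ + s₂] ![r₁ + r₂] +
        (((r₁ + r₂).choose r₁ : ℚ)) •
          (∑ j ∈ Finset.Icc 1 s₁, lam s₁ s₂ j • biBracket ![j] ![r₁ + r₂]) +
        (((r₁ + r₂).choose r₁ : ℚ)) •
          (∑ j ∈ Finset.Icc 1 s₂, lam s₂ s₁ j • biBracket ![j] ![r₁ + r₂]) := by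
  ext N
  -- LHS as a sum over QF N
  have hdisj : Set.PairwiseDisjoint (↑(Finset.HasAntidiagonal.antidiagonal N))
      (fun nn : ℕ × ℕ => nn.1.divisorsAntidiagonal ×ˢ nn.2.divisorsAntidiagonal) := by
    intro x hx y hy hxy
    simp only [Function.onFun]
    rw [Finset.disjoint_left]
    intro pq hpx hpy
    rw [Finset.mem_product, Nat.mem_divisorsAntidiagonal, Nat.mem_divisorsAntidiagonal] at hpx hpy
    exact hxy (Prod.ext (by rw [← hpx.1.1, hpy.1.1]) (by rw [← hpx.2.1, hpy.2.1]))
  have hL : (PowerSeries.coeff N) (biBracket ![s₁] ![r₁] * biBracket ![s₂] ![r₂])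
      = ((r₁.factorial:ℚ) * ((s₁-1).factorial:ℚ) *
          ((r₂.factorial:ℚ) * ((s₂-1).factorial:ℚ)))⁻¹ *
        ∑ pq ∈ QF N,
          (pq.1.1:ℚ)^r₁ * (pq.1.2:ℚ)^(s₁-1) * (pq.2.1:ℚ)^r₂ * (pq.2.2:ℚ)^(s₂-1) := by
    rw [PowerSeries.coeff_mul]
    have hterm : ∀ x ∈ Finset.HasAntidiagonal.antidiagonal N,
        (PowerSeries.coeff x.1) (biBracket ![s₁] ![r₁]) *
          (PowerSeries.coeff x.2) (biBracket ![s₂] ![r₂])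
        = ((r₁.factorial:ℚ) * ((s₁-1).factorial:ℚ) *
            ((r₂.factorial:ℚ) * ((s₂-1).factorial:ℚ)))⁻¹ *
            ∑ pq ∈ x.1.divisorsAntidiagonal ×ˢ x.2.divisorsAntidiagonal,
              (pq.1.1:ℚ)^r₁ * (pq.1.2:ℚ)^(s₁-1) * (pq.2.1:ℚ)^r₂ * (pq.2.2:ℚ)^(s₂-1) := by
      intro x _
      rw [coeff_biBracket_one, coeff_biBracket_one]
      have hAB : (∑ p ∈ x.1.divisorsAntidiagonal, (p.1:ℚ)^r₁ * (p.2:ℚ)^(s₁-1)) *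
          (∑ q ∈ x.2.divisorsAntidiagonal, (q.1:ℚ)^r₂ * (q.2:ℚ)^(s₂-1))
          = ∑ pq ∈ x.1.divisorsAntidiagonal ×ˢ x.2.divisorsAntidiagonal,
              (pq.1.1:ℚ)^r₁ * (pq.1.2:ℚ)^(s₁-1) * (pq.2.1:ℚ)^r₂ * (pq.2.2:ℚ)^(s₂-1) := by
        rw [Finset.sum_mul_sum, Finset.sum_product]
        exact Finset.sum_congr rfl fun p _ => Finset.sum_congr rfl fun q _ => by ring
      rw [mul_mul_mul_comm, ← mul_inv, hAB]
    rw [Finset.sum_congr rfl hterm, ← Finset.mul_sum]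
    congr 1
    rw [QF, Finset.sum_biUnion hdisj]
  -- split into three parts
  have hsplit : ∑ pq ∈ QF N,
        (pq.1.1:ℚ)^r₁ * (pq.1.2:ℚ)^(s₁-1) * (pq.2.1:ℚ)^r₂ * (pq.2.2:ℚ)^(s₂-1)
      = (∑ pq ∈ (QF N).filter (fun pq => pq.2.1 < pq.1.1),
          (pq.1.1:ℚ)^r₁ * (pq.1.2:ℚ)^(s₁-1) * (pq.2.1:ℚ)^r₂ * (pq.2.2:ℚ)^(s₂-1))
        + (∑ pq ∈ (QF N).filter (fun pq => pq.1.1 < pq.2.1),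
          (pq.1.1:ℚ)^r₁ * (pq.1.2:ℚ)^(s₁-1) * (pq.2.1:ℚ)^r₂ * (pq.2.2:ℚ)^(s₂-1))
        + (∑ pq ∈ (QF N).filter (fun pq => pq.1.1 = pq.2.1),
          (pq.1.1:ℚ)^r₁ * (pq.1.2:ℚ)^(s₁-1) * (pq.2.1:ℚ)^r₂ * (pq.2.2:ℚ)^(s₂-1)) := by
    rw [← Finset.sum_filter_add_sum_filter_not (QF N) (fun pq => pq.2.1 < pq.1.1),
      ← Finset.sum_filter_add_sum_filter_not
        ((QF N).filter (fun pq => ¬ pq.2.1 < pq.1.1)) (fun pq => pq.1.1 < pq.2.1),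
      Finset.filter_filter, Finset.filter_filter, add_assoc]
    congr 2
    · exact Finset.sum_congr
        (Finset.filter_congr (fun pq _ => by
          constructor
          · intro h; exact h.2
          · intro h; exact ⟨by omega, h⟩)) (fun _ _ => rfl)
    · exact Finset.sum_congr
        (Finset.filter_congr (fun pq _ => by
          constructor
          · intro h; omega
          · intro h; omega)) (fun _ _ => rfl)
  -- the second part equals the swapped-bracket sum
  have hswap : ∑ pq ∈ (QF N).filter (fun pq => pq.1.1 < pq.2.1),
        (pq.1.1:ℚ)^r₁ * (pq.1.2:ℚ)^(s₁-1) * (pq.2.1:ℚ)^r₂ * (pq.2.2:ℚ)^(s₂-1)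
      = ∑ pq ∈ (QF N).filter (fun pq => pq.2.1 < pq.1.1),
          (pq.1.1:ℚ)^r₂ * (pq.1.2:ℚ)^(s₂-1) * (pq.2.1:ℚ)^r₁ * (pq.2.2:ℚ)^(s₁-1) := by
    apply Finset.sum_nbij' Prod.swap Prod.swap
    · intro pq h
      rw [Finset.mem_filter, mem_QF] at h ⊢
      exact ⟨⟨by rw [add_comm]; exact h.1.1, h.1.2.2, h.1.2.1⟩, h.2⟩
    · intro pq h
      rw [Finset.mem_filter, mem_QF] at h ⊢
      exact ⟨⟨by rw [add_comm]; exact h.1.1, h.1.2.2, h.1.2.1⟩, h.2⟩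
    · intro pq _; exact Prod.swap_swap pq
    · intro pq _; exact Prod.swap_swap pq
    · intro pq _
      simp only [Prod.fst_swap, Prod.snd_swap]
      ring
  -- RHS coefficientwise
  rw [map_add, map_add, map_add, map_add,
    coeff_biBracket_two s₁ s₂ r₁ r₂ N, coeff_biBracket_two s₂ s₁ r₂ r₁ N,
    LinearMap.map_smul, LinearMap.map_smul, LinearMap.map_smul, smul_eq_mul, smul_eq_mul,
    smul_eq_mul, coeff_biBracket_one, map_sum, map_sum]
  have hsum1 : ∀ (t : ℕ) (tt : ℕ), ∑ j ∈ Icc 1 t,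
      (PowerSeries.coeff N) (lam t tt j • biBracket ![j] ![r₁ + r₂])
      = ∑ j ∈ Icc 1 t, lam t tt j * (((r₁+r₂).factorial:ℚ) * ((j-1).factorial:ℚ))⁻¹ *
          ∑ p ∈ N.divisorsAntidiagonal, (p.1:ℚ)^(r₁+r₂) * (p.2:ℚ)^(j-1) := by
    intro t tt
    apply Finset.sum_congr rfl
    intro j _
    rw [LinearMap.map_smul, smul_eq_mul, coeff_biBracket_one, mul_assoc]
  rw [hsum1 s₁ s₂, hsum1 s₂ s₁, hL, hsplit, hswap, diag_sum s₁ s₂ r₁ r₂ N hs₁ hs₂]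
  -- now a pure algebraic identity
  have hchoose : ((r₁+r₂).choose r₁ : ℚ) = ((r₁+r₂).factorial : ℚ) /
      ((r₁.factorial:ℚ) * (r₂.factorial:ℚ)) := by
    rw [eq_div_iff (by positivity)]
    have hn : (r₁+r₂).choose r₁ * (r₁.factorial * r₂.factorial) = (r₁+r₂).factorial := by
      rw [Nat.choose_symm_add, ← mul_assoc]
      exact Nat.add_choose_mul_factorial_mul_factorial r₁ r₂
    exact_mod_cast hn
  have n1 : (r₁.factorial:ℚ) ≠ 0 := by exact_mod_cast r₁.factorial_ne_zero
  have n2 : (r₂.factorial:ℚ) ≠ 0 := by exact_mod_cast r₂.factorial_ne_zero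
  have n3 : ((s₁-1).factorial:ℚ) ≠ 0 := by exact_mod_cast (s₁-1).factorial_ne_zero
  have n4 : ((s₂-1).factorial:ℚ) ≠ 0 := by exact_mod_cast (s₂-1).factorial_ne_zero
  have n5 : ((r₁+r₂).factorial:ℚ) ≠ 0 := by exact_mod_cast (r₁+r₂).factorial_ne_zero
  have n6 : ((s₁+s₂-1).factorial:ℚ) ≠ 0 := by exact_mod_cast (s₁+s₂-1).factorial_ne_zero
  -- pull the factorial constants out of the j-sums on both sides
  have hpull : ∀ (t tt : ℕ),
      ∑ j ∈ Icc 1 t, lam t tt j * (((r₁+r₂).factorial:ℚ) * ((j-1).factorial:ℚ))⁻¹ *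
          ∑ p ∈ N.divisorsAntidiagonal, (p.1:ℚ)^(r₁+r₂) * (p.2:ℚ)^(j-1)
      = ((r₁+r₂).factorial:ℚ)⁻¹ *
          ∑ j ∈ Icc 1 t, lam t tt j / ((j-1).factorial:ℚ) *
            ∑ p ∈ N.divisorsAntidiagonal, (p.1:ℚ)^(r₁+r₂) * (p.2:ℚ)^(j-1) := by
    intro t tt
    rw [Finset.mul_sum]
    apply Finset.sum_congr rfl
    intro j _
    rw [mul_inv]
    ring
  rw [hpull s₁ s₂, hpull s₂ s₁, hchoose]
  field_simp
  ring
end
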